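/- arXiv:2405.09319 — 9 statements merged into one kernel-verified Lean document; each statement's English description precedes it below -/
import Mathlib

section
/- Let G be a graph on n vertices satisfying: ∑_{v ∈ V(G)} (deg(v) − n/2)² ≤ C·n^α with α < 3, λ_1(G) = n/2 + O(n^β) with β < 1, and |λ_2(G)| ≤ C·n^γ with γ < 1 (λ_2 being the second largest eigenvalue in absolute value). Then for all S, T ⊆ V(G), |e(S,T) − |S||T|/2| ≤ C'·n^θ·√(|S||T|), where θ = max((1+α)/4, β, γ) and C' depends only on C and the implied constants. -/
open scoped Classical

open Matrix Finset

/-- `e(S,T)`: the number of edges with one endpoint in `S` and one in `T`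
(edges inside `S ∩ T` counted twice), as the number of ordered adjacent pairs. -/
noncomputable def crossEdges {V : Type*} [Fintype V] (G : SimpleGraph V)
    (S T : Finset V) : ℝ :=
  ∑ u ∈ S, ∑ v ∈ T, if G.Adj u v then (1 : ℝ) else 0

private lemma parseval' {n : ℕ} {A : Matrix (Fin n) (Fin n) ℝ} (hA : A.IsHermitian)
    (x y : Fin n → ℝ) :
    ∑ i, (⇑(hA.eigenvectorBasis i) ⬝ᵥ x) * (⇑(hA.eigenvectorBasis i) ⬝ᵥ y) = x ⬝ᵥ y := by
  have h := hA.eigenvectorBasis.sum_inner_mul_inner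
      ((EuclideanSpace.equiv (Fin n) ℝ).symm x) ((EuclideanSpace.equiv (Fin n) ℝ).symm y)
  simpa [PiLp.inner_apply, dotProduct, real_inner_comm, mul_comm] using h

private lemma coeff_mulVec' {n : ℕ} {A : Matrix (Fin n) (Fin n) ℝ} (hA : A.IsHermitian)
    (y : Fin n → ℝ) (i : Fin n) :
    ⇑(hA.eigenvectorBasis i) ⬝ᵥ (A *ᵥ y) =
      hA.eigenvalues i * (⇑(hA.eigenvectorBasis i) ⬝ᵥ y) := by
  have hT : Aᵀ = A := by
    have := hA.eq
    ext a b
    have := congrFun (congrFun this a) b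
    simpa [conjTranspose_apply] using this
  rw [dotProduct_mulVec, ← mulVec_transpose, hT, hA.mulVec_eigenvectorBasis]
  simp [smul_dotProduct, smul_eq_mul]

private lemma spectral' {n : ℕ} {A : Matrix (Fin n) (Fin n) ℝ} (hA : A.IsHermitian)
    (x y : Fin n → ℝ) :
    x ⬝ᵥ (A *ᵥ y) = ∑ i, hA.eigenvalues i *
      (⇑(hA.eigenvectorBasis i) ⬝ᵥ x) * (⇑(hA.eigenvectorBasis i) ⬝ᵥ y) := by
  rw [← parseval' hA x (A *ᵥ y)]
  refine Finset.sum_congr rfl fun i _ => ?_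
  rw [coeff_mulVec' hA y i]; ring

private lemma crossEdges_eq {n : ℕ} (G : SimpleGraph (Fin n)) (S T : Finset (Fin n)) :
    crossEdges G S T =
      (fun v => if v ∈ S then (1:ℝ) else 0) ⬝ᵥ
        (G.adjMatrix ℝ *ᵥ fun v => if v ∈ T then (1:ℝ) else 0) := by
  simp only [crossEdges, dotProduct, mulVec, dotProduct, SimpleGraph.adjMatrix_apply,
    ite_mul, one_mul, zero_mul, mul_ite, mul_one, mul_zero, Finset.sum_ite_mem,
    Finset.univ_inter, Finset.sum_ite_eq]

private lemma indicator_dot {n : ℕ} (S T : Finset (Fin n)) :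
    (fun v => if v ∈ S then (1:ℝ) else 0) ⬝ᵥ (fun v => if v ∈ T then (1:ℝ) else 0)
      = ((S ∩ T).card : ℝ) := by
  simp only [dotProduct, ite_mul, one_mul, zero_mul, mul_ite, mul_one, mul_zero,
    ← ite_and, ← Finset.mem_inter, Finset.sum_ite_mem, Finset.univ_inter,
    Finset.sum_const, nsmul_eq_mul, mul_one, Finset.inter_comm]

private lemma ones_dot_indicator {n : ℕ} (S : Finset (Fin n)) :
    (fun _ : Fin n => (1:ℝ)) ⬝ᵥ (fun v => if v ∈ S then (1:ℝ) else 0) = (S.card : ℝ) := by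
  simp [dotProduct, Finset.sum_ite_mem]

set_option maxHeartbeats 1000000 in
/-- expander mixing lemma for quasi-random graphs: given constants `C > 0`,
`α < 3`, `β < 1`, `γ < 1`, there is a constant `C' > 0` such that every graph `G` on `n`
vertices satisfying `∑_v (deg v - n/2)² ≤ C n^α`, having an eigenvalue `λ₁` (of the
adjacency matrix) with `|λ₁ - n/2| ≤ C n^β` while all remaining eigenvalues satisfy
`|λ| ≤ C n^γ`, obeys `|e(S,T) - |S||T|/2| ≤ C' n^θ √(|S||T|)` for all vertex subsets
`S, T`, where `θ = max((1+α)/4, β, γ)`. -/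
theorem stmt6 (C α β γ : ℝ) (hC : 0 < C) (hα : α < 3) (hβ : β < 1) (hγ : γ < 1) :
    ∃ C' > 0, ∀ (n : ℕ) (G : SimpleGraph (Fin n))
      (hA : (G.adjMatrix ℝ).IsHermitian),
      (∑ v : Fin n, ((G.degree v : ℝ) - n / 2) ^ 2 ≤ C * (n : ℝ) ^ α) →
      (∃ i₀ : Fin n, |hA.eigenvalues i₀ - n / 2| ≤ C * (n : ℝ) ^ β ∧
        ∀ i : Fin n, i ≠ i₀ → |hA.eigenvalues i| ≤ C * (n : ℝ) ^ γ) →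
      ∀ S T : Finset (Fin n),
        |crossEdges G S T - (S.card : ℝ) * T.card / 2| ≤
          C' * (n : ℝ) ^ (max (max ((1 + α) / 4) β) γ) *
            Real.sqrt ((S.card : ℝ) * T.card) := by
  set θ := max (max ((1 + α) / 4) β) γ with hθdef
  have hβθ : β ≤ θ := le_max_of_le_left (le_max_right _ _)
  have hγθ : γ ≤ θ := le_max_right _ _
  have hαθ : (1 + α) / 4 ≤ θ := le_max_of_le_left (le_max_left _ _)
  -- choose N₀ with (n:ℝ)^(1-γ) ≥ 4C for n ≥ N₀
  have htend : Filter.Tendsto (fun n : ℕ => (n:ℝ) ^ (1 - γ)) Filter.atTop Filter.atTop :=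
    (tendsto_rpow_atTop (by linarith : (0:ℝ) < 1 - γ)).comp tendsto_natCast_atTop_atTop
  obtain ⟨N₀, hN₀⟩ := Filter.eventually_atTop.mp (htend.eventually_ge_atTop (4 * C))
  set N₁ : ℕ := max N₀ 1 with hN₁def
  set K : ℝ := 18 * C + 4 * Real.sqrt C + (3 / 2) * ((N₁ : ℝ) + 1) ^ (1 + |θ|) with hKdef
  have hN₁pos : (0:ℝ) < (N₁:ℝ) + 1 := by positivity
  have hK : 0 < K := by positivity
  refine ⟨K, hK, ?_⟩
  rintro n G hA hdeg ⟨i₀, hi₀, hrest⟩ S T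
  by_cases hST : S = ∅ ∨ T = ∅
  · have h0 : crossEdges G S T = 0 ∧ ((S.card : ℝ) * T.card = 0) := by
      rcases hST with h | h <;> subst h <;> simp [crossEdges]
    rw [h0.1, h0.2]
    simp only [zero_div, sub_zero, abs_zero, Real.sqrt_zero]
    positivity
  push_neg at hST
  obtain ⟨hSne, hTne⟩ := hST
  have hSne' : S.Nonempty := hSne
  have hTne' : T.Nonempty := hTne
  have hnpos : 0 < n := by
    obtain ⟨v, -⟩ := hSne'
    exact v.pos
  have hn1 : (1:ℝ) ≤ (n:ℝ) := by exact_mod_cast hnpos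
  have hn0 : (0:ℝ) < (n:ℝ) := by positivity
  -- notation
  set A := G.adjMatrix ℝ with hAdef
  set b := hA.eigenvectorBasis with hbdef
  set μ := hA.eigenvalues with hμdef
  set χS : Fin n → ℝ := fun v => if v ∈ S then 1 else 0 with hχS
  set χT : Fin n → ℝ := fun v => if v ∈ T then 1 else 0 with hχT
  set s : Fin n → ℝ := fun i => ⇑(b i) ⬝ᵥ χS with hsdef
  set t : Fin n → ℝ := fun i => ⇑(b i) ⬝ᵥ χT with htdef
  set c : Fin n → ℝ := fun i => ⇑(b i) ⬝ᵥ (fun _ => (1:ℝ)) with hcdef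
  have hcross : crossEdges G S T = ∑ i, μ i * s i * t i := by
    rw [crossEdges_eq, spectral' hA]
  have hSsum : ∑ i, s i ^ 2 = (S.card : ℝ) := by
    have := parseval' hA χS χS
    have h2 := indicator_dot S S
    simp only [Finset.inter_self] at h2
    rw [h2] at this
    simpa [pow_two] using this
  have hTsum : ∑ i, t i ^ 2 = (T.card : ℝ) := by
    have := parseval' hA χT χT
    have h2 := indicator_dot T T
    simp only [Finset.inter_self] at h2
    rw [h2] at this
    simpa [pow_two] using this
  have hcsum : ∑ i, c i ^ 2 = (n : ℝ) := by
    have h := parseval' hA (fun _ => (1:ℝ)) (fun _ => (1:ℝ))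
    have h1 : (fun _ : Fin n => (1:ℝ)) ⬝ᵥ (fun _ : Fin n => (1:ℝ)) = (n:ℝ) := by
      simp [dotProduct]
    rw [h1] at h
    rw [← h]
    exact Finset.sum_congr rfl fun i _ => pow_two (c i)
  have hcs : ∑ i, c i * s i = (S.card : ℝ) := by
    have := parseval' hA (fun _ => (1:ℝ)) χS
    rwa [ones_dot_indicator] at this
  have hct : ∑ i, c i * t i = (T.card : ℝ) := by
    have := parseval' hA (fun _ => (1:ℝ)) χT
    rwa [ones_dot_indicator] at this
  have hdegsum : ∑ i, (μ i - n / 2) ^ 2 * c i ^ 2 ≤ C * (n:ℝ) ^ α := by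
    set z : Fin n → ℝ := fun v => (G.degree v : ℝ) - n / 2 with hz
    have hzA : z = (A *ᵥ fun _ => (1:ℝ)) - (n / 2 : ℝ) • (fun _ => (1:ℝ)) := by
      funext v
      simp [hz, hAdef, Matrix.sub_apply, Pi.sub_apply, Pi.smul_apply, smul_eq_mul,
        SimpleGraph.adjMatrix_mulVec_apply]
    have hbz : ∀ i, ⇑(b i) ⬝ᵥ z = (μ i - n / 2) * c i := by
      intro i
      rw [hzA, dotProduct_sub, coeff_mulVec' hA _ i, dotProduct_smul]
      simp only [smul_eq_mul]
      ring
    have hp := parseval' hA z z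
    have hzz : z ⬝ᵥ z = ∑ v, ((G.degree v : ℝ) - n / 2) ^ 2 := by
      simp [dotProduct, hz, pow_two]
    calc ∑ i, (μ i - n / 2) ^ 2 * c i ^ 2
        = ∑ i, (⇑(b i) ⬝ᵥ z) * (⇑(b i) ⬝ᵥ z) := by
          refine Finset.sum_congr rfl fun i _ => ?_
          rw [hbz i]; ring
      _ = z ⬝ᵥ z := hp
      _ = ∑ v, ((G.degree v : ℝ) - n / 2) ^ 2 := hzz
      _ ≤ C * (n:ℝ) ^ α := hdeg
  have hcE0 : 0 ≤ crossEdges G S T := by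
    refine Finset.sum_nonneg fun u _ => Finset.sum_nonneg fun v _ => ?_
    split <;> norm_num
  have hcE1 : crossEdges G S T ≤ (S.card : ℝ) * T.card := by
    calc crossEdges G S T ≤ ∑ _u ∈ S, ∑ _v ∈ T, (1:ℝ) := by
          refine Finset.sum_le_sum fun u _ => Finset.sum_le_sum fun v _ => ?_
          split <;> norm_num
      _ = (S.card : ℝ) * T.card := by simp [mul_comm]
  -- from now on, forget all definitions: pure scalar reasoning
  clear_value s t c
  clear_value χS χT
  clear_value μ b
  clear_value A
  -- Q : mass of the ones vector off the top eigenvector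
  set Q : ℝ := ∑ i ∈ Finset.univ.erase i₀, c i ^ 2 with hQdef
  have hQnn : 0 ≤ Q := Finset.sum_nonneg fun i _ => sq_nonneg _
  have hcQ : c i₀ ^ 2 = (n : ℝ) - Q := by
    have h := Finset.sum_erase_add Finset.univ (fun i => c i ^ 2) (Finset.mem_univ i₀)
    rw [hcsum] at h
    have h' : Q + c i₀ ^ 2 = (n:ℝ) := h
    linarith
  -- square-root facts
  set Ps : ℝ := Real.sqrt (S.card : ℝ) with hPs
  set Pt : ℝ := Real.sqrt (T.card : ℝ) with hPt
  have hPsnn : 0 ≤ Ps := Real.sqrt_nonneg _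
  have hPtnn : 0 ≤ Pt := Real.sqrt_nonneg _
  have habs_of_sq : ∀ x M : ℝ, 0 ≤ M → x ^ 2 ≤ M → |x| ≤ Real.sqrt M := by
    intro x M hM h
    rw [← Real.sqrt_sq_eq_abs]
    exact Real.sqrt_le_sqrt h
  have hs0 : |s i₀| ≤ Ps := by
    refine habs_of_sq _ _ (by positivity) ?_
    rw [← hSsum]
    exact Finset.single_le_sum (f := fun i => s i ^ 2) (fun i _ => sq_nonneg _)
      (Finset.mem_univ i₀)
  have ht0 : |t i₀| ≤ Pt := by
    refine habs_of_sq _ _ (by positivity) ?_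
    rw [← hTsum]
    exact Finset.single_le_sum (f := fun i => t i ^ 2) (fun i _ => sq_nonneg _)
      (Finset.mem_univ i₀)
  have hc0 : |c i₀| ≤ Real.sqrt n := by
    refine habs_of_sq _ _ (by positivity) ?_
    rw [hcQ]; linarith
  have hserase : ∑ i ∈ Finset.univ.erase i₀, s i ^ 2 ≤ (S.card : ℝ) := by
    rw [← hSsum]
    exact Finset.sum_le_sum_of_subset_of_nonneg (Finset.erase_subset _ _)
      (fun i _ _ => by positivity)
  have hterase : ∑ i ∈ Finset.univ.erase i₀, t i ^ 2 ≤ (T.card : ℝ) := by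
    rw [← hTsum]
    exact Finset.sum_le_sum_of_subset_of_nonneg (Finset.erase_subset _ _)
      (fun i _ _ => by positivity)
  set rS : ℝ := ∑ i ∈ Finset.univ.erase i₀, c i * s i with hrS
  set rT : ℝ := ∑ i ∈ Finset.univ.erase i₀, c i * t i with hrT
  have hrSb : |rS| ≤ Real.sqrt Q * Ps := by
    have hcs2 := Finset.sum_mul_sq_le_sq_mul_sq (Finset.univ.erase i₀) c s
    rw [← hrS, ← hQdef] at hcs2
    have h3 : rS ^ 2 ≤ Q * (S.card : ℝ) :=
      le_trans hcs2 (mul_le_mul_of_nonneg_left hserase hQnn)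
    calc |rS| ≤ Real.sqrt (Q * (S.card : ℝ)) := habs_of_sq _ _ (by positivity) h3
      _ = Real.sqrt Q * Ps := Real.sqrt_mul hQnn _
  have hrTb : |rT| ≤ Real.sqrt Q * Pt := by
    have hcs2 := Finset.sum_mul_sq_le_sq_mul_sq (Finset.univ.erase i₀) c t
    rw [← hrT, ← hQdef] at hcs2
    have h3 : rT ^ 2 ≤ Q * (T.card : ℝ) :=
      le_trans hcs2 (mul_le_mul_of_nonneg_left hterase hQnn)
    calc |rT| ≤ Real.sqrt (Q * (T.card : ℝ)) := habs_of_sq _ _ (by positivity) h3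
      _ = Real.sqrt Q * Pt := Real.sqrt_mul hQnn _
  set R : ℝ := ∑ i ∈ Finset.univ.erase i₀, μ i * s i * t i with hR
  -- main decomposition
  have hSsplit : (S.card : ℝ) = c i₀ * s i₀ + rS := by
    have h := Finset.sum_erase_add Finset.univ (fun i => c i * s i) (Finset.mem_univ i₀)
    rw [hcs] at h
    have h' : rS + c i₀ * s i₀ = (S.card:ℝ) := h
    linarith
  have hTsplit : (T.card : ℝ) = c i₀ * t i₀ + rT := by
    have h := Finset.sum_erase_add Finset.univ (fun i => c i * t i) (Finset.mem_univ i₀)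
    rw [hct] at h
    have h' : rT + c i₀ * t i₀ = (T.card:ℝ) := h
    linarith
  have hcrosssplit : crossEdges G S T = μ i₀ * s i₀ * t i₀ + R := by
    have h := Finset.sum_erase_add Finset.univ (fun i => μ i * s i * t i) (Finset.mem_univ i₀)
    have h' : R + μ i₀ * s i₀ * t i₀ = ∑ i, μ i * s i * t i := h
    rw [hcross]
    linarith
  have hE : crossEdges G S T - (S.card : ℝ) * T.card / 2 =
      (μ i₀ - c i₀ ^ 2 / 2) * (s i₀ * t i₀) + R
        - (c i₀ * s i₀ * rT + c i₀ * t i₀ * rS + rS * rT) / 2 := by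
    rw [hcrosssplit, hSsplit, hTsplit]; ring
  have hPsPt : Ps * Pt = Real.sqrt ((S.card : ℝ) * T.card) :=
    (Real.sqrt_mul (Nat.cast_nonneg _) _).symm
  have hPsPtnn : 0 ≤ Ps * Pt := mul_nonneg hPsnn hPtnn
  -- bound on the off-i₀ spectral term
  have hRb : |R| ≤ C * (n:ℝ) ^ γ * (Ps * Pt) := by
    have hCγ : 0 ≤ C * (n:ℝ) ^ γ := by positivity
    have h1 : |R| ≤ ∑ i ∈ Finset.univ.erase i₀, |μ i| * (|s i| * |t i|) := by
      refine (Finset.abs_sum_le_sum_abs _ _).trans (le_of_eq ?_)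
      refine Finset.sum_congr rfl fun i _ => ?_
      rw [abs_mul, abs_mul, mul_assoc]
    have h2 : ∑ i ∈ Finset.univ.erase i₀, |μ i| * (|s i| * |t i|) ≤
        C * (n:ℝ) ^ γ * ∑ i ∈ Finset.univ.erase i₀, |s i| * |t i| := by
      rw [Finset.mul_sum]
      refine Finset.sum_le_sum fun i hi => ?_
      exact mul_le_mul_of_nonneg_right (hrest i (Finset.ne_of_mem_erase hi))
        (mul_nonneg (abs_nonneg _) (abs_nonneg _))
    have h3 : ∑ i ∈ Finset.univ.erase i₀, |s i| * |t i| ≤ Ps * Pt := by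
      have hcs2 := Finset.sum_mul_sq_le_sq_mul_sq (Finset.univ.erase i₀)
        (fun i => |s i|) (fun i => |t i|)
      simp only [sq_abs] at hcs2
      have h4 : (∑ i ∈ Finset.univ.erase i₀, |s i| * |t i|) ^ 2 ≤
          (S.card : ℝ) * T.card := by
        refine hcs2.trans ?_
        exact mul_le_mul hserase hterase
          (Finset.sum_nonneg fun i _ => sq_nonneg _) (Nat.cast_nonneg _)
      have h5 : 0 ≤ ∑ i ∈ Finset.univ.erase i₀, |s i| * |t i| :=
        Finset.sum_nonneg fun i _ => mul_nonneg (abs_nonneg _) (abs_nonneg _)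
      have h6 := habs_of_sq _ _ (by positivity) h4
      rwa [abs_of_nonneg h5, ← hPsPt] at h6
    calc |R| ≤ C * (n:ℝ) ^ γ * ∑ i ∈ Finset.univ.erase i₀, |s i| * |t i| :=
          h1.trans h2
      _ ≤ C * (n:ℝ) ^ γ * (Ps * Pt) := mul_le_mul_of_nonneg_left h3 hCγ
  -- bound on |X1|
  have hX1 : |(μ i₀ - c i₀ ^ 2 / 2) * (s i₀ * t i₀)| ≤
      (C * (n:ℝ) ^ β + Q / 2) * (Ps * Pt) := by
    rw [abs_mul]
    refine mul_le_mul ?_ ?_ (abs_nonneg _) (by positivity)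
    · have heq : μ i₀ - c i₀ ^ 2 / 2 = (μ i₀ - n / 2) + Q / 2 := by
        rw [hcQ]; ring
      calc |μ i₀ - c i₀ ^ 2 / 2| ≤ |μ i₀ - n / 2| + |Q / 2| := by
            rw [heq]; exact abs_add_le _ _
        _ ≤ C * (n:ℝ) ^ β + Q / 2 := by
            rw [abs_of_nonneg (by linarith : (0:ℝ) ≤ Q / 2)]
            linarith [hi₀]
    · rw [abs_mul]
      exact mul_le_mul hs0 ht0 (abs_nonneg _) hPsnn
  -- bounds on the pieces of X3
  have hb1 : |c i₀ * s i₀ * rT| ≤ Real.sqrt n * Real.sqrt Q * (Ps * Pt) := by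
    rw [abs_mul, abs_mul]
    have h1 : |c i₀| * |s i₀| ≤ Real.sqrt n * Ps :=
      mul_le_mul hc0 hs0 (abs_nonneg _) (Real.sqrt_nonneg _)
    calc |c i₀| * |s i₀| * |rT| ≤ (Real.sqrt n * Ps) * (Real.sqrt Q * Pt) :=
          mul_le_mul h1 hrTb (abs_nonneg _) (by positivity)
      _ = Real.sqrt n * Real.sqrt Q * (Ps * Pt) := by ring
  have hb2 : |c i₀ * t i₀ * rS| ≤ Real.sqrt n * Real.sqrt Q * (Ps * Pt) := by
    rw [abs_mul, abs_mul]
    have h1 : |c i₀| * |t i₀| ≤ Real.sqrt n * Pt :=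
      mul_le_mul hc0 ht0 (abs_nonneg _) (Real.sqrt_nonneg _)
    calc |c i₀| * |t i₀| * |rS| ≤ (Real.sqrt n * Pt) * (Real.sqrt Q * Ps) :=
          mul_le_mul h1 hrSb (abs_nonneg _) (by positivity)
      _ = Real.sqrt n * Real.sqrt Q * (Ps * Pt) := by ring
  have hb3 : |rS * rT| ≤ Q * (Ps * Pt) := by
    rw [abs_mul]
    calc |rS| * |rT| ≤ (Real.sqrt Q * Ps) * (Real.sqrt Q * Pt) :=
          mul_le_mul hrSb hrTb (abs_nonneg _) (by positivity)
      _ = (Real.sqrt Q * Real.sqrt Q) * (Ps * Pt) := by ring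
      _ = Q * (Ps * Pt) := by rw [Real.mul_self_sqrt hQnn]
  -- triangle inequality
  have htri : |crossEdges G S T - (S.card : ℝ) * T.card / 2| ≤
      |(μ i₀ - c i₀ ^ 2 / 2) * (s i₀ * t i₀)| + |R| +
        (|c i₀ * s i₀ * rT| + |c i₀ * t i₀ * rS| + |rS * rT|) / 2 := by
    rw [hE]
    have h1 := abs_add_three ((μ i₀ - c i₀ ^ 2 / 2) * (s i₀ * t i₀)) R
      (-((c i₀ * s i₀ * rT + c i₀ * t i₀ * rS + rS * rT) / 2))
    have h2 := abs_add_three (c i₀ * s i₀ * rT) (c i₀ * t i₀ * rS) (rS * rT)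
    have h3 : |-((c i₀ * s i₀ * rT + c i₀ * t i₀ * rS + rS * rT) / 2)| =
        |c i₀ * s i₀ * rT + c i₀ * t i₀ * rS + rS * rT| / 2 := by
      rw [abs_neg, abs_div]
      norm_num
    rw [h3] at h1
    have h4 : (μ i₀ - c i₀ ^ 2 / 2) * (s i₀ * t i₀) + R -
        (c i₀ * s i₀ * rT + c i₀ * t i₀ * rS + rS * rT) / 2 =
        (μ i₀ - c i₀ ^ 2 / 2) * (s i₀ * t i₀) + R +
        -((c i₀ * s i₀ * rT + c i₀ * t i₀ * rS + rS * rT) / 2) := by ring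
    rw [h4]
    linarith
  -- global bound before branching on n
  have hmaster : |crossEdges G S T - (S.card : ℝ) * T.card / 2| ≤
      (C * (n:ℝ) ^ β + C * (n:ℝ) ^ γ + Q + Real.sqrt n * Real.sqrt Q) * (Ps * Pt) := by
    calc |crossEdges G S T - (S.card : ℝ) * T.card / 2| ≤
        |(μ i₀ - c i₀ ^ 2 / 2) * (s i₀ * t i₀)| + |R| +
          (|c i₀ * s i₀ * rT| + |c i₀ * t i₀ * rS| + |rS * rT|) / 2 := htri
      _ ≤ (C * (n:ℝ) ^ β + Q / 2) * (Ps * Pt) + C * (n:ℝ) ^ γ * (Ps * Pt) +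
          (Real.sqrt n * Real.sqrt Q * (Ps * Pt) + Real.sqrt n * Real.sqrt Q * (Ps * Pt)
            + Q * (Ps * Pt)) / 2 := by
          gcongr
      _ = (C * (n:ℝ) ^ β + C * (n:ℝ) ^ γ + Q + Real.sqrt n * Real.sqrt Q) * (Ps * Pt) := by
          ring
  clear hAdef hbdef hμdef hsdef htdef hcdef hχS hχT hcross hSsum hTsum hcsum hcs hct
    hserase hterase hrS hrT hE htri hX1 hRb hb1 hb2 hb3 hrSb hrTb hs0 ht0 hc0 hcQ
  rw [← hPsPt]
  by_cases hn : N₁ ≤ n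
  · -- main case: n large
    have hnθ : ∀ e : ℝ, e ≤ θ → (n:ℝ) ^ e ≤ (n:ℝ) ^ θ := fun e he =>
      Real.rpow_le_rpow_of_exponent_le hn1 he
    have hθpos : 0 < (n:ℝ) ^ θ := Real.rpow_pos_of_pos hn0 θ
    have hμ4 : ∀ i, i ≠ i₀ → |μ i| ≤ (n:ℝ) / 4 := by
      intro i hi
      refine (hrest i hi).trans ?_
      have h4C : 4 * C ≤ (n:ℝ) ^ (1 - γ) := hN₀ n (le_trans (le_max_left _ _) hn)
      have hmul : (n:ℝ) ^ (1 - γ) * (n:ℝ) ^ γ = (n:ℝ) := by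
        rw [← Real.rpow_add hn0]
        simp
      have hγpos : (0:ℝ) < (n:ℝ) ^ γ := Real.rpow_pos_of_pos hn0 γ
      have h5 : 4 * C * (n:ℝ) ^ γ ≤ (n:ℝ) ^ (1 - γ) * (n:ℝ) ^ γ :=
        mul_le_mul_of_nonneg_right h4C hγpos.le
      rw [hmul] at h5
      linarith
    have hdeg2 : ∑ i ∈ Finset.univ.erase i₀, (μ i - n / 2) ^ 2 * c i ^ 2 ≤
        C * (n:ℝ) ^ α := by
      refine le_trans ?_ hdegsum
      exact Finset.sum_le_sum_of_subset_of_nonneg (Finset.erase_subset _ _)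
        (fun i _ _ => mul_nonneg (sq_nonneg _) (sq_nonneg _))
    have hQ2 : (n:ℝ) ^ 2 / 16 * Q ≤ C * (n:ℝ) ^ α := by
      have h1 : ∀ i ∈ Finset.univ.erase i₀,
          (n:ℝ) ^ 2 / 16 * c i ^ 2 ≤ (μ i - n / 2) ^ 2 * c i ^ 2 := by
        intro i hi
        have hμi := abs_le.1 (hμ4 i (Finset.ne_of_mem_erase hi))
        have hcn := sq_nonneg (c i)
        have h0 : (n:ℝ) / 4 ≤ (n:ℝ) / 2 - μ i := by linarith [hμi.2]
        have h0' : ((n:ℝ) / 4) ^ 2 ≤ ((n:ℝ) / 2 - μ i) ^ 2 :=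
          pow_le_pow_left₀ (by positivity) h0 2
        calc (n:ℝ) ^ 2 / 16 * c i ^ 2 = ((n:ℝ) / 4) ^ 2 * c i ^ 2 := by ring
          _ ≤ ((n:ℝ) / 2 - μ i) ^ 2 * c i ^ 2 := mul_le_mul_of_nonneg_right h0' hcn
          _ = (μ i - (n:ℝ) / 2) ^ 2 * c i ^ 2 := by ring
      calc (n:ℝ) ^ 2 / 16 * Q = ∑ i ∈ Finset.univ.erase i₀, (n:ℝ) ^ 2 / 16 * c i ^ 2 := by
            rw [hQdef, Finset.mul_sum]
        _ ≤ ∑ i ∈ Finset.univ.erase i₀, (μ i - n / 2) ^ 2 * c i ^ 2 :=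
            Finset.sum_le_sum h1
        _ ≤ C * (n:ℝ) ^ α := hdeg2
    have hsplitα : (n:ℝ) ^ α = (n:ℝ) ^ (α - 2) * (n:ℝ) ^ 2 := by
      rw [show ((n:ℝ) ^ 2 : ℝ) = (n:ℝ) ^ (2:ℝ) by
        rw [← Real.rpow_natCast (n:ℝ) 2]; norm_num]
      rw [← Real.rpow_add hn0]
      norm_num
    have hn2pos : (0:ℝ) < (n:ℝ) ^ 2 := by positivity
    have hQb : Q ≤ 16 * C * (n:ℝ) ^ (α - 2) := by
      rw [hsplitα] at hQ2
      have h2 : Q * ((n:ℝ) ^ 2 / 16) ≤ (16 * C * (n:ℝ) ^ (α - 2)) * ((n:ℝ) ^ 2 / 16) := by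
        calc Q * ((n:ℝ) ^ 2 / 16) = (n:ℝ) ^ 2 / 16 * Q := by ring
          _ ≤ C * ((n:ℝ) ^ (α - 2) * (n:ℝ) ^ 2) := hQ2
          _ = (16 * C * (n:ℝ) ^ (α - 2)) * ((n:ℝ) ^ 2 / 16) := by ring
      exact le_of_mul_le_mul_right h2 (by positivity)
    have hQθ : Q ≤ 16 * C * (n:ℝ) ^ θ := by
      refine hQb.trans ?_
      exact mul_le_mul_of_nonneg_left (hnθ (α - 2) (by linarith)) (by positivity)
    have hnQ : (n:ℝ) * Q ≤ 16 * C * ((n:ℝ) ^ θ) ^ 2 := by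
      have h1 : (n:ℝ) * (n:ℝ) ^ (α - 2) = (n:ℝ) ^ (α - 1) := by
        nth_rewrite 1 [show ((n:ℝ) : ℝ) = (n:ℝ) ^ (1:ℝ) from (Real.rpow_one _).symm]
        rw [← Real.rpow_add hn0, show (1:ℝ) + (α - 2) = α - 1 by ring]
      have h2 : (n:ℝ) ^ (α - 1) ≤ (n:ℝ) ^ (2 * θ) :=
        Real.rpow_le_rpow_of_exponent_le hn1 (by linarith)
      have h3 : (n:ℝ) ^ (2 * θ) = ((n:ℝ) ^ θ) ^ 2 := by
        rw [show (2 * θ) = θ * 2 by ring, Real.rpow_mul hn0.le,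
          ← Real.rpow_natCast ((n:ℝ) ^ θ) 2]
        norm_num
      calc (n:ℝ) * Q ≤ (n:ℝ) * (16 * C * (n:ℝ) ^ (α - 2)) :=
            mul_le_mul_of_nonneg_left hQb hn0.le
        _ = 16 * C * ((n:ℝ) * (n:ℝ) ^ (α - 2)) := by ring
        _ = 16 * C * (n:ℝ) ^ (α - 1) := by rw [h1]
        _ ≤ 16 * C * (n:ℝ) ^ (2 * θ) := mul_le_mul_of_nonneg_left h2 (by positivity)
        _ = 16 * C * ((n:ℝ) ^ θ) ^ 2 := by rw [h3]
    have hsqnQ : Real.sqrt n * Real.sqrt Q ≤ 4 * Real.sqrt C * (n:ℝ) ^ θ := by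
      have hsqC : Real.sqrt C ^ 2 = C := Real.sq_sqrt hC.le
      have h1 : Real.sqrt n * Real.sqrt Q = Real.sqrt ((n:ℝ) * Q) :=
        (Real.sqrt_mul hn0.le Q).symm
      rw [h1]
      have h2 : Real.sqrt ((n:ℝ) * Q) ≤ Real.sqrt (16 * C * ((n:ℝ) ^ θ) ^ 2) :=
        Real.sqrt_le_sqrt hnQ
      refine h2.trans (le_of_eq ?_)
      rw [show 16 * C * ((n:ℝ) ^ θ) ^ 2 = (4 * Real.sqrt C * (n:ℝ) ^ θ) ^ 2 by
        rw [mul_pow, mul_pow, hsqC]; ring]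
      exact Real.sqrt_sq (by positivity)
    refine hmaster.trans ?_
    refine mul_le_mul_of_nonneg_right ?_ hPsPtnn
    have c1 : C * (n:ℝ) ^ β ≤ C * (n:ℝ) ^ θ :=
      mul_le_mul_of_nonneg_left (hnθ β hβθ) hC.le
    have c2 : C * (n:ℝ) ^ γ ≤ C * (n:ℝ) ^ θ :=
      mul_le_mul_of_nonneg_left (hnθ γ hγθ) hC.le
    have hKge : 18 * C + 4 * Real.sqrt C ≤ K := by
      have h0 : (0:ℝ) ≤ (3 / 2) * ((N₁ : ℝ) + 1) ^ (1 + |θ|) := by positivity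
      rw [hKdef]; linarith
    have h5 : (18 * C + 4 * Real.sqrt C) * (n:ℝ) ^ θ ≤ K * (n:ℝ) ^ θ :=
      mul_le_mul_of_nonneg_right hKge hθpos.le
    linarith [c1, c2, hQθ, hsqnQ, h5]
  · -- small case : n < N₁
    push_neg at hn
    have hθpos : 0 < (n:ℝ) ^ θ := Real.rpow_pos_of_pos hn0 θ
    have hEb : |crossEdges G S T - (S.card : ℝ) * T.card / 2| ≤
        (S.card : ℝ) * T.card / 2 := by
      rw [abs_le]
      exact ⟨by linarith, by linarith⟩
    have hSTnn : (0:ℝ) ≤ (S.card : ℝ) * T.card := by positivity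
    have hcard : (S.card : ℝ) * T.card ≤ (n:ℝ) ^ 2 := by
      have h1 : (S.card : ℝ) ≤ n := by
        exact_mod_cast (Finset.card_le_univ S).trans_eq (by simp)
      have h2 : (T.card : ℝ) ≤ n := by
        exact_mod_cast (Finset.card_le_univ T).trans_eq (by simp)
      nlinarith [Nat.cast_nonneg (α := ℝ) S.card, Nat.cast_nonneg (α := ℝ) T.card]
    have hsqST : Real.sqrt ((S.card : ℝ) * T.card) ≤ (n:ℝ) := by
      have := Real.sqrt_le_sqrt hcard
      rwa [Real.sqrt_sq hn0.le] at this
    have hmulself : Real.sqrt ((S.card : ℝ) * T.card) * Real.sqrt ((S.card : ℝ) * T.card)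
        = (S.card : ℝ) * T.card := Real.mul_self_sqrt hSTnn
    have hsqSTnn : 0 ≤ Real.sqrt ((S.card : ℝ) * T.card) := Real.sqrt_nonneg _
    -- key: n/2 ≤ K * n^θ for n < N₁
    have hnN : (n:ℝ) ≤ (N₁ : ℝ) + 1 := by
      have : (n:ℝ) ≤ (N₁:ℝ) := by exact_mod_cast hn.le
      linarith
    have hr1 : (n:ℝ) ^ (-|θ|) ≤ (n:ℝ) ^ θ :=
      Real.rpow_le_rpow_of_exponent_le hn1 (neg_abs_le θ)
    have hr2 : ((N₁:ℝ) + 1) ^ (-|θ|) ≤ (n:ℝ) ^ (-|θ|) :=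
      Real.rpow_le_rpow_of_nonpos hn0 hnN (neg_nonpos.2 (abs_nonneg θ))
    have hr3 : ((N₁:ℝ) + 1) ^ (1 + |θ|) * ((N₁:ℝ) + 1) ^ (-|θ|) = (N₁:ℝ) + 1 := by
      rw [← Real.rpow_add hN₁pos]
      norm_num
    have hKn : (n:ℝ) / 2 ≤ K * (n:ℝ) ^ θ := by
      have hpow1 : (0:ℝ) < ((N₁:ℝ) + 1) ^ (1 + |θ|) := Real.rpow_pos_of_pos hN₁pos _
      have h6 : ((N₁:ℝ) + 1) ^ (1 + |θ|) * ((N₁:ℝ) + 1) ^ (-|θ|) ≤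
          ((N₁:ℝ) + 1) ^ (1 + |θ|) * (n:ℝ) ^ θ :=
        mul_le_mul_of_nonneg_left (hr2.trans hr1) hpow1.le
      rw [hr3] at h6
      have h7 : (3 / 2) * ((N₁:ℝ) + 1) ≤ (3 / 2) * (((N₁:ℝ) + 1) ^ (1 + |θ|) * (n:ℝ) ^ θ) := by
        linarith
      have h8 : (3 / 2) * (((N₁:ℝ) + 1) ^ (1 + |θ|)) * (n:ℝ) ^ θ ≤ K * (n:ℝ) ^ θ := by
        have h0 : (0:ℝ) ≤ 18 * C + 4 * Real.sqrt C := by positivity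
        have : (3 / 2) * (((N₁:ℝ) + 1) ^ (1 + |θ|)) ≤ K := by rw [hKdef]; linarith
        exact mul_le_mul_of_nonneg_right this hθpos.le
      have h9 : (n:ℝ) / 2 ≤ (3 / 2) * ((N₁:ℝ) + 1) := by linarith
      calc (n:ℝ) / 2 ≤ (3 / 2) * ((N₁:ℝ) + 1) := h9
        _ ≤ (3 / 2) * (((N₁:ℝ) + 1) ^ (1 + |θ|) * (n:ℝ) ^ θ) := h7
        _ = (3 / 2) * (((N₁:ℝ) + 1) ^ (1 + |θ|)) * (n:ℝ) ^ θ := by ring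
        _ ≤ K * (n:ℝ) ^ θ := h8
    calc |crossEdges G S T - (S.card : ℝ) * T.card / 2| ≤
        (S.card : ℝ) * T.card / 2 := hEb
      _ = (Real.sqrt ((S.card : ℝ) * T.card) / 2) * Real.sqrt ((S.card : ℝ) * T.card) := by
          rw [div_mul_eq_mul_div, hmulself]
      _ ≤ ((n:ℝ) / 2) * Real.sqrt ((S.card : ℝ) * T.card) := by
          refine mul_le_mul_of_nonneg_right ?_ hsqSTnn
          linarith
      _ ≤ (K * (n:ℝ) ^ θ) * Real.sqrt ((S.card : ℝ) * T.card) :=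
          mul_le_mul_of_nonneg_right hKn hsqSTnn
      _ = K * (n:ℝ) ^ θ * (Ps * Pt) := by rw [hPsPt]
end

section
/- There is no family 𝒢 of graphs with unboundedly many vertices, constant c > 0, and exponent θ < 1/2 such that every G ∈ 𝒢 on n vertices satisfies |e(S,T) − |S||T|/2| ≤ c·n^θ·√(|S||T|) for all S, T ⊆ V(G). -/
open scoped Classical

/-- there is no family of graphs with unboundedly many vertices, constant
`c > 0`, and exponent `θ < 1/2`, such that every member `G` on `n` vertices satisfies
`|e(S,T) - |S||T|/2| ≤ c n^θ √(|S||T|)` for all vertex subsets `S, T`.  Equivalently: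
for every `c > 0` and `θ < 1/2`, it is not the case that there exist graphs with
arbitrarily many vertices satisfying this bound. -/
theorem stmt7 (c θ : ℝ) (hc : 0 < c) (hθ : θ < 1 / 2) :
    ¬ (∀ N : ℕ, ∃ n : ℕ, N ≤ n ∧ ∃ G : SimpleGraph (Fin n),
        ∀ S T : Finset (Fin n),
          |crossEdges G S T - (S.card : ℝ) * T.card / 2| ≤
            c * (n : ℝ) ^ θ * Real.sqrt ((S.card : ℝ) * T.card)) := by
  intro h
  -- choose a threshold a so that for x ≥ a both rpow bounds hold
  have h1 : Filter.Tendsto (fun x : ℝ => x ^ (1 - 2*θ)) Filter.atTop Filter.atTop :=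
    tendsto_rpow_atTop (by linarith)
  have h2 : Filter.Tendsto (fun x : ℝ => x ^ (1 - θ)) Filter.atTop Filter.atTop :=
    tendsto_rpow_atTop (by linarith)
  have hev := (h1.eventually_gt_atTop (16*c^2)).and (h2.eventually_gt_atTop (4*c))
  obtain ⟨a, ha⟩ := Filter.eventually_atTop.mp hev
  obtain ⟨n, hnN, G, hG⟩ := h (max 1 ⌈a⌉₊)
  have hn1 : 1 ≤ n := le_trans (le_max_left _ _) hnN
  have hna : a ≤ (n : ℝ) := by
    calc a ≤ (⌈a⌉₊ : ℝ) := Nat.le_ceil a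
    _ ≤ (n : ℝ) := by
        exact_mod_cast le_trans (le_max_right 1 ⌈a⌉₊) hnN
  obtain ⟨hb1, hb2⟩ := ha (n : ℝ) hna
  have npos : (0 : ℝ) < n := by exact_mod_cast hn1
  set X : ℝ := c * (n : ℝ) ^ θ with hX
  have hrpos : (0 : ℝ) < (n : ℝ) ^ θ := Real.rpow_pos_of_pos npos θ
  have hXpos : 0 < X := mul_pos hc hrpos
  -- degree bound: every degree ≤ 4 X^2
  have hdeg : ∀ u : Fin n, (G.degree u : ℝ) ≤ 4 * X ^ 2 := by
    intro u
    have hcross : crossEdges G {u} (G.neighborFinset u) = (G.degree u : ℝ) := by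
      unfold crossEdges
      rw [Finset.sum_singleton]
      rw [Finset.sum_congr rfl (fun v hv => by
        rw [if_pos ((G.mem_neighborFinset u v).mp hv)])]
      rw [Finset.sum_const, SimpleGraph.card_neighborFinset_eq_degree, nsmul_eq_mul, mul_one]
    have hb := hG {u} (G.neighborFinset u)
    rw [hcross] at hb
    simp only [Finset.card_singleton, Nat.cast_one, one_mul,
      SimpleGraph.card_neighborFinset_eq_degree] at hb
    have hdnn : (0 : ℝ) ≤ (G.degree u : ℝ) := Nat.cast_nonneg _
    have habs : (G.degree u : ℝ) - (G.degree u : ℝ) / 2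
        ≤ X * Real.sqrt (G.degree u) := by
      exact le_trans (le_abs_self _) hb
    have hs : Real.sqrt (G.degree u) * Real.sqrt (G.degree u) = (G.degree u : ℝ) :=
      Real.mul_self_sqrt hdnn
    have hsnn : 0 ≤ Real.sqrt (G.degree u) := Real.sqrt_nonneg _
    nlinarith [sq_nonneg (Real.sqrt (G.degree u) - 2*X)]
  -- total edge count
  have hsum : crossEdges G Finset.univ Finset.univ = ∑ u, (G.degree u : ℝ) := by
    unfold crossEdges
    apply Finset.sum_congr rfl
    intro u _
    rw [Finset.sum_boole]
    norm_cast
    rw [← SimpleGraph.card_neighborFinset_eq_degree, SimpleGraph.neighborFinset_eq_filter]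
  have hsum_le : crossEdges G Finset.univ Finset.univ ≤ (n : ℝ) * (4 * X ^ 2) := by
    rw [hsum]
    calc ∑ u, (G.degree u : ℝ) ≤ ∑ _u : Fin n, 4 * X ^ 2 :=
          Finset.sum_le_sum (fun u _ => hdeg u)
      _ = (n : ℝ) * (4 * X ^ 2) := by
          rw [Finset.sum_const, Finset.card_univ, Fintype.card_fin, nsmul_eq_mul]
  have hb := hG Finset.univ Finset.univ
  simp only [Finset.card_univ, Fintype.card_fin] at hb
  have hsqrt : Real.sqrt ((n : ℝ) * n) = (n : ℝ) :=
    Real.sqrt_mul_self (le_of_lt npos)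
  rw [hsqrt] at hb
  have hmain : (n : ℝ) * n / 2 ≤ (n : ℝ) * (4 * X ^ 2) + X * n := by
    have := le_trans (neg_le_of_abs_le hb) (le_refl _)
    have h' : (n : ℝ) * n / 2 - crossEdges G Finset.univ Finset.univ ≤ X * n := by
      have := abs_le.mp hb
      linarith [this.1]
    linarith [hsum_le]
  -- now derive the contradiction from hb1, hb2
  have e1 : (n : ℝ) ^ (1 - 2*θ) * ((n : ℝ) ^ θ * (n : ℝ) ^ θ) = (n : ℝ) := by
    rw [← Real.rpow_add npos, ← Real.rpow_add npos]
    have : 1 - 2*θ + (θ + θ) = 1 := by ring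
    rw [this, Real.rpow_one]
  have e2 : (n : ℝ) ^ (1 - θ) * (n : ℝ) ^ θ = (n : ℝ) := by
    rw [← Real.rpow_add npos]
    have : 1 - θ + θ = 1 := by ring
    rw [this, Real.rpow_one]
  have hq1 : 4 * X ^ 2 < (n : ℝ) / 4 := by
    have : 16 * c ^ 2 * ((n : ℝ) ^ θ * (n : ℝ) ^ θ)
        < (n : ℝ) ^ (1 - 2*θ) * ((n : ℝ) ^ θ * (n : ℝ) ^ θ) := by
      apply mul_lt_mul_of_pos_right hb1 (mul_pos hrpos hrpos)
    rw [e1] at this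
    rw [hX]; nlinarith
  have hq2 : X < (n : ℝ) / 4 := by
    have : 4 * c * (n : ℝ) ^ θ < (n : ℝ) ^ (1 - θ) * (n : ℝ) ^ θ :=
      mul_lt_mul_of_pos_right hb2 hrpos
    rw [e2] at this
    rw [hX]; nlinarith
  nlinarith [hmain, mul_lt_mul_of_pos_left hq1 npos, mul_lt_mul_of_pos_left hq2 npos]
end

section
/- Let G be a graph on n vertices such that every induced subgraph on a vertex set S satisfies e(G[S]) ≥ |S|²/4 − C·n^θ·|S| for some constants C ≥ 1 and θ ∈ [1/2,1). Then the clique number satisfies ω(G) ≥ (1−θ−o(1))·log₂ n as n → ∞. Concretely, for any m with 2^m < n^{1−θ}/(4C) + 1, G contains a clique of size m. -/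
open scoped Classical

/-- The number of edges of the subgraph of `G` induced on the vertex set `S`, as a real
number: half the number of ordered adjacent pairs in `S × S`. -/
noncomputable def inducedEdges {V : Type*} [Fintype V] (G : SimpleGraph V)
    (S : Finset V) : ℝ :=
  (((S ×ˢ S).filter fun p => G.Adj p.1 p.2).card : ℝ) / 2

lemma inducedEdges_sum {V : Type*} [Fintype V] (G : SimpleGraph V) (T : Finset V) :
    (((T ×ˢ T).filter fun p => G.Adj p.1 p.2).card : ℝ)
      = ∑ v ∈ T, ((T.filter (G.Adj v)).card : ℝ) := by
  have hnat : ((T ×ˢ T).filter fun p => G.Adj p.1 p.2).card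
      = ∑ v ∈ T, (T.filter (G.Adj v)).card := by
    rw [Finset.card_filter, Finset.sum_product]
    exact Finset.sum_congr rfl fun v _ => (Finset.card_filter _ _).symm
  rw [hnat]
  push_cast
  rfl

/-- there is a vertex of `T` of degree (within `T`) at least the average. -/
lemma exists_big_degree {V : Type*} [Fintype V] (G : SimpleGraph V) (T : Finset V)
    (hT : T.Nonempty) :
    ∃ v ∈ T, 2 * inducedEdges G T / T.card ≤ ((T.filter (G.Adj v)).card : ℝ) := by
  have hTpos : (0 : ℝ) < T.card := by exact_mod_cast Finset.card_pos.2 hT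
  apply Finset.exists_le_of_sum_le hT
  rw [← inducedEdges_sum, Finset.sum_const, nsmul_eq_mul]
  rw [inducedEdges]
  field_simp
  exact le_rfl

/-- if every induced subgraph of `G` (on `n` vertices) satisfies
`e(G[S]) ≥ |S|²/4 - C n^θ |S|` with `C ≥ 1` and `θ ∈ [1/2, 1)`, then for every `m` with
`2^m < n^{1-θ}/(4C) + 1`, the graph `G` contains a clique of size `m`; in particular
`ω(G) ≥ (1-θ-o(1)) log₂ n`. -/
theorem stmt8 {V : Type*} [Fintype V] (G : SimpleGraph V) (C θ : ℝ)
    (hC : 1 ≤ C) (hθ : 1 / 2 ≤ θ) (hθ1 : θ < 1)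
    (hlow : ∀ S : Finset V,
      (S.card : ℝ) ^ 2 / 4 - C * (Fintype.card V : ℝ) ^ θ * S.card ≤ inducedEdges G S) :
    ∀ m : ℕ, (2 : ℝ) ^ m < (Fintype.card V : ℝ) ^ (1 - θ) / (4 * C) + 1 →
      ∃ s : Finset V, G.IsNClique m s := by
  intro m hm
  set n : ℝ := (Fintype.card V : ℝ) with hn
  have hCpos : (0 : ℝ) < C := lt_of_lt_of_le one_pos hC
  rcases Nat.eq_zero_or_pos (Fintype.card V) with h0 | hcard
  · exfalso
    rw [hn] at hm
    rw [h0] at hm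
    simp only [Nat.cast_zero] at hm
    rw [Real.zero_rpow (by linarith : (1 : ℝ) - θ ≠ 0)] at hm
    have : (1 : ℝ) ≤ 2 ^ m := one_le_pow₀ (by norm_num)
    rw [zero_div] at hm
    linarith
  have hnpos : (0 : ℝ) < n := by rw [hn]; exact_mod_cast hcard
  have hntpos : (0 : ℝ) < n ^ θ := Real.rpow_pos_of_pos hnpos θ
  -- positivity of the lower bound at each step k < m
  have hpos : ∀ k : ℕ, k < m →
      0 < n / 2 ^ k - 4 * C * n ^ θ * (1 - (1 / 2 : ℝ) ^ k) := by
    intro k hk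
    have h2k : (2 : ℝ) ^ k < 2 ^ m := by
      exact pow_lt_pow_right₀ (by norm_num) hk
    have h1 : (2 : ℝ) ^ k - 1 < n ^ (1 - θ) / (4 * C) := by linarith
    have h2 : 4 * C * ((2 : ℝ) ^ k - 1) < n ^ (1 - θ) := by
      rw [lt_div_iff₀ (by linarith : (0:ℝ) < 4 * C)] at h1
      linarith [h1]
    have h3 : n ^ (1 - θ) * n ^ θ = n := by
      rw [← Real.rpow_add hnpos]; simp
    have h4 : 4 * C * n ^ θ * ((2 : ℝ) ^ k - 1) < n := by
      nlinarith [h2, hntpos]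
    have h2kpos : (0 : ℝ) < 2 ^ k := by positivity
    have heq : n / 2 ^ k - 4 * C * n ^ θ * (1 - (1 / 2 : ℝ) ^ k)
        = (n - 4 * C * n ^ θ * ((2 : ℝ) ^ k - 1)) / 2 ^ k := by
      rw [one_div, inv_pow]
      field_simp
    rw [heq]
    exact div_pos (by linarith) h2kpos
  -- main induction
  have key : ∀ k : ℕ, k ≤ m → ∃ s T : Finset V, G.IsNClique k s ∧
      (∀ v ∈ T, ∀ u ∈ s, G.Adj u v) ∧
      n / 2 ^ k - 4 * C * n ^ θ * (1 - (1 / 2 : ℝ) ^ k) ≤ T.card := by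
    intro k
    induction k with
    | zero =>
      intro _
      refine ⟨∅, Finset.univ, ⟨by simp [SimpleGraph.IsClique], by simp⟩, by simp, ?_⟩
      simp [hn]
    | succ k ih =>
      intro hk1
      obtain ⟨s, T, hclique, hadj, hcardT⟩ := ih (le_of_lt (Nat.lt_of_succ_le hk1))
      have hbpos := hpos k (Nat.lt_of_succ_le hk1)
      have hTpos : (0 : ℝ) < T.card := lt_of_lt_of_le hbpos hcardT
      have hTne : T.Nonempty := Finset.card_pos.1 (by exact_mod_cast hTpos)
      obtain ⟨v, hvT, hvdeg⟩ := exists_big_degree G T hTne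
      -- degree lower bound
      have hE := hlow T
      have hdeg2 : (T.card : ℝ) / 2 - 2 * C * n ^ θ ≤ 2 * inducedEdges G T / T.card := by
        rw [le_div_iff₀ hTpos]
        nlinarith [hE]
      have hdeg : (T.card : ℝ) / 2 - 2 * C * n ^ θ ≤ ((T.filter (G.Adj v)).card : ℝ) :=
        le_trans hdeg2 hvdeg
      have hvns : v ∉ s := fun hvs => G.irrefl (hadj v hvT v hvs)
      refine ⟨insert v s, T.filter (G.Adj v),
        hclique.insert (fun b hb => (hadj v hvT b hb).symm), ?_, ?_⟩
      · intro w hw u hu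
        rcases Finset.mem_insert.1 hu with rfl | hus
        · exact (Finset.mem_filter.1 hw).2
        · exact hadj w (Finset.mem_filter.1 hw).1 u hus
      · have heq : n / 2 ^ (k + 1) - 4 * C * n ^ θ * (1 - (1 / 2 : ℝ) ^ (k + 1))
            = (n / 2 ^ k - 4 * C * n ^ θ * (1 - (1 / 2 : ℝ) ^ k)) / 2 - 2 * C * n ^ θ := by
          rw [pow_succ, pow_succ]; ring
        rw [heq]
        have : (n / 2 ^ k - 4 * C * n ^ θ * (1 - (1 / 2 : ℝ) ^ k)) / 2 - 2 * C * n ^ θ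
            ≤ (T.card : ℝ) / 2 - 2 * C * n ^ θ := by linarith
        linarith
  obtain ⟨s, T, hclique, _, _⟩ := key m le_rfl
  exact ⟨s, hclique⟩
end

section
/- Let q be an odd prime power, let χ be the quadratic character of F_q, and let f(x,y) = d + ax + by + cxy ∈ F_q[x,y] with ab − cd ≠ 0. Then for all u ≠ v in F_q such that neither f(x,u) nor f(x,v) is a constant polynomial, the polynomial f(x,u)·f(x,v) ∈ F_q[x] is not a constant multiple of a square of a polynomial, and |∑_{x ∈ F_q} χ(f(x,u)f(x,v))| ≤ 2√q. -/
open scoped Classical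

/-- The quadratic character of a finite field, valued in `ℝ`, with `χ 0 = 0`. -/
noncomputable def quadChar (F : Type*) [Field F] (t : F) : ℝ :=
  if t = 0 then 0 else if IsSquare t then 1 else -1

open Polynomial

lemma quadChar_eq_cast (F : Type*) [Field F] [Fintype F] (t : F) :
    quadChar F t = ((quadraticChar F t : ℤ) : ℝ) := by
  rw [quadraticChar_apply, quadraticCharFun, quadChar]
  split_ifs <;> simp

lemma sum_quadchar_shift (F : Type*) [Field F] [Fintype F] (hF : ringChar F ≠ 2)
    {r s : F} (hrs : r ≠ s) :
    ∑ x : F, quadraticChar F ((x - r) * (x - s)) = -1 := by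
  classical
  have h0 : ∑ t : F, quadraticChar F t = 0 := quadraticChar_sum_zero hF
  rw [← Finset.sum_erase_add Finset.univ _ (Finset.mem_univ r)]
  have hr0 : quadraticChar F ((r - r) * (r - s)) = 0 := by simp
  rw [hr0, add_zero]
  have key : ∑ x ∈ Finset.univ.erase r, quadraticChar F ((x - r) * (x - s))
      = ∑ t ∈ Finset.univ.erase 1, quadraticChar F t := by
    apply Finset.sum_bij' (fun x _ => 1 + (r - s) / (x - r))
      (fun t _ => r + (r - s) / (t - 1))
    · intro x hx
      have hx : x ≠ r := Finset.ne_of_mem_erase hx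
      simp only [Finset.mem_erase, Finset.mem_univ, and_true]
      intro h
      rw [add_eq_left] at h
      exact div_ne_zero (sub_ne_zero.mpr hrs) (sub_ne_zero.mpr hx) h
    · intro t ht
      have ht : t ≠ 1 := Finset.ne_of_mem_erase ht
      simp only [Finset.mem_erase, Finset.mem_univ, and_true]
      intro h
      rw [add_eq_left] at h
      exact div_ne_zero (sub_ne_zero.mpr hrs) (sub_ne_zero.mpr ht) h
    · intro x hx
      have hx : x ≠ r := Finset.ne_of_mem_erase hx
      have hxr : x - r ≠ 0 := sub_ne_zero.mpr hx
      rw [add_sub_cancel_left, div_div_eq_mul_div, mul_comm, mul_div_assoc,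
        div_self (sub_ne_zero.mpr hrs), mul_one]
      ring
    · intro t ht
      have ht : t ≠ 1 := Finset.ne_of_mem_erase ht
      have ht1 : t - 1 ≠ 0 := sub_ne_zero.mpr ht
      rw [add_sub_cancel_left, div_div_eq_mul_div, mul_comm, mul_div_assoc,
        div_self (sub_ne_zero.mpr hrs), mul_one]
      ring
    · intro x hx
      have hx : x ≠ r := Finset.ne_of_mem_erase hx
      have hxr : x - r ≠ 0 := sub_ne_zero.mpr hx
      have hfac : (x - r) * (x - s) = (x - r) ^ 2 * (1 + (r - s) / (x - r)) := by
        field_simp; ring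
      rw [hfac, map_mul, quadraticChar_sq_one' hxr, one_mul]
  rw [key]
  have := Finset.sum_erase_add Finset.univ (fun t => quadraticChar F t) (Finset.mem_univ (1 : F))
  rw [h0] at this
  have h1 : quadraticChar F (1 : F) = 1 := by simp
  simp only [map_one] at this
  linarith


/-- let `f(x,y) = d + ax + by + cxy` over `F_q` (`q` odd) with `ab - cd ≠ 0`.
For `u ≠ v` such that neither `f(x,u) = (cu+a)x + (d+bu)` nor `f(x,v)` is constant,
the polynomial `f(x,u)·f(x,v)` is not a constant multiple of a square of a polynomial,
and `|∑_{x ∈ F_q} χ(f(x,u)f(x,v))| ≤ 2√q`. -/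
theorem stmt11 (F : Type*) [Field F] [Fintype F] (hodd : Odd (Fintype.card F))
    (a b c d : F) (hadm : a * b - c * d ≠ 0)
    (P : F → Polynomial F)
    (hP : ∀ u : F, P u = Polynomial.C (d + b * u) + Polynomial.C (c * u + a) * Polynomial.X)
    (u v : F) (huv : u ≠ v)
    (hu : c * u + a ≠ 0) (hv : c * v + a ≠ 0) :
    (¬ ∃ (c₀ : F) (h : Polynomial F), P u * P v = Polynomial.C c₀ * h ^ 2) ∧
    |∑ x : F, quadChar F ((P u).eval x * (P v).eval x)| ≤
      2 * Real.sqrt (Fintype.card F) := by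
    classical
  have hF : ringChar F ≠ 2 := by
    intro h
    have h2 := FiniteField.even_card_of_char_two h
    rw [Nat.odd_iff] at hodd
    omega
  set r : F := -((d + b * u) / (c * u + a)) with hr_def
  set s : F := -((d + b * v) / (c * v + a)) with hs_def
  have hru : (c * u + a) * r = -(d + b * u) := by rw [hr_def]; field_simp
  have hsv : (c * v + a) * s = -(d + b * v) := by rw [hs_def]; field_simp
  have hfu : P u = Polynomial.C (c * u + a) * (Polynomial.X - Polynomial.C r) := by
    rw [hP u, mul_sub, ← Polynomial.C_mul, hru, Polynomial.C_neg]
    ring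
  have hfv : P v = Polynomial.C (c * v + a) * (Polynomial.X - Polynomial.C s) := by
    rw [hP v, mul_sub, ← Polynomial.C_mul, hsv, Polynomial.C_neg]
    ring
  have hrs : r ≠ s := by
    intro h
    rw [hr_def, hs_def, neg_inj, div_eq_div_iff hu hv] at h
    have h2 : (a * b - c * d) * (u - v) = 0 := by linear_combination h
    rcases mul_eq_zero.mp h2 with h' | h'
    · exact hadm h'
    · exact huv (sub_eq_zero.mp h')
  have hPu0 : P u ≠ 0 := by
    rw [hfu]
    exact mul_ne_zero (Polynomial.C_ne_zero.mpr hu) (Polynomial.X_sub_C_ne_zero r)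
  have hPv0 : P v ≠ 0 := by
    rw [hfv]
    exact mul_ne_zero (Polynomial.C_ne_zero.mpr hv) (Polynomial.X_sub_C_ne_zero s)
  have hevr : (P u).eval r = 0 := by rw [hfu]; simp
  have hevs : (P v).eval s = 0 := by rw [hfv]; simp
  constructor
  · rintro ⟨c₀, h, heq⟩
    have hc0 : c₀ ≠ 0 := by
      intro hc
      rw [hc] at heq
      simp at heq
      rcases heq with h' | h'
      · exact hPu0 h'
      · exact hPv0 h'
    have hh0 : h ≠ 0 := by
      intro hh
      rw [hh] at heq
      simp at heq
      rcases heq with h' | h'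
      · exact hPu0 h'
      · exact hPv0 h'
    have hdeg : (P u * P v).natDegree = 2 := by
      rw [Polynomial.natDegree_mul hPu0 hPv0, hP u, hP v, add_comm (Polynomial.C (d + b * u)),
        add_comm (Polynomial.C (d + b * v)), Polynomial.natDegree_linear hu,
        Polynomial.natDegree_linear hv]
    have hdeg2 : (Polynomial.C c₀ * h ^ 2).natDegree = 2 * h.natDegree := by
      rw [Polynomial.natDegree_mul (by simpa using hc0) (pow_ne_zero 2 hh0),
        Polynomial.natDegree_C, Polynomial.natDegree_pow]
      ring
    have hdh : h.natDegree = 1 := by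
      rw [heq, hdeg2] at hdeg
      omega
    have hhr : h.eval r = 0 := by
      have := congrArg (Polynomial.eval r) heq
      simp only [Polynomial.eval_mul, Polynomial.eval_pow, Polynomial.eval_C, hevr,
        zero_mul] at this
      have h2 := (mul_eq_zero.mp this.symm).resolve_left hc0
      exact pow_eq_zero_iff (by norm_num) |>.mp h2
    have hhs : h.eval s = 0 := by
      have := congrArg (Polynomial.eval s) heq
      simp only [Polynomial.eval_mul, Polynomial.eval_pow, Polynomial.eval_C, hevs,
        mul_zero] at this
      have h2 := (mul_eq_zero.mp this.symm).resolve_left hc0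
      exact pow_eq_zero_iff (by norm_num) |>.mp h2
    have hr_mem : r ∈ h.roots.toFinset := by
      simp [Polynomial.mem_roots, hh0, hhr, Polynomial.IsRoot]
    have hs_mem : s ∈ h.roots.toFinset := by
      simp [Polynomial.mem_roots, hh0, hhs, Polynomial.IsRoot]
    have h2le : 2 ≤ h.roots.toFinset.card :=
      Finset.one_lt_card.mpr ⟨r, hr_mem, s, hs_mem, hrs⟩
    have hle : h.roots.toFinset.card ≤ 1 :=
      le_trans (Multiset.toFinset_card_le _) (le_trans (Polynomial.card_roots' h) hdh.le)
    omega
  · have hev : ∀ x : F, (P u).eval x * (P v).eval x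
        = ((c * u + a) * (c * v + a)) * ((x - r) * (x - s)) := by
      intro x
      rw [hfu, hfv]
      simp
      ring
    have hsum : ∑ x : F, quadChar F ((P u).eval x * (P v).eval x)
        = ((quadraticChar F ((c * u + a) * (c * v + a)) * (-1) : ℤ) : ℝ) := by
      have : ∑ x : F, quadChar F ((P u).eval x * (P v).eval x)
          = ((∑ x : F, quadraticChar F ((c * u + a) * (c * v + a))
              * quadraticChar F ((x - r) * (x - s)) : ℤ) : ℝ) := by
        push_cast
        refine Finset.sum_congr rfl fun x _ => ?_
        rw [quadChar_eq_cast, hev x, map_mul]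
        push_cast
        ring
      rw [this, ← Finset.mul_sum, sum_quadchar_shift F hF hrs]
    rw [hsum]
    have hd := quadraticChar_dichotomy (F := F) (mul_ne_zero hu hv)
    have habs : |((quadraticChar F ((c * u + a) * (c * v + a)) * (-1) : ℤ) : ℝ)| = 1 := by
      rcases hd with h' | h' <;> rw [h'] <;> norm_num
    rw [habs]
    have h1 : (1 : ℝ) ≤ Real.sqrt (Fintype.card F) := by
      rw [show (1 : ℝ) = Real.sqrt 1 by simp]
      exact Real.sqrt_le_sqrt (by exact_mod_cast Fintype.card_pos)
    linarith
end

section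
/- Let A, B be n×n normal complex matrices with eigenvalues λ_1(A),...,λ_n(A) and λ_1(B),...,λ_n(B). Then there exists a permutation σ of {1,...,n} such that ∑_{i=1}^n |λ_i(A) − λ_{σ(i)}(B)|² ≤ ‖A − B‖², where ‖M‖² = ∑_{i,j} |m_{ij}|² is the squared Frobenius norm. -/
open scoped Matrix

open Matrix BigOperators

private lemma exists_comp_perm_eq {α : Type*} : ∀ (n : ℕ) (f g : Fin n → α),
    List.Perm (List.ofFn f) (List.ofFn g) → ∃ σ : Equiv.Perm (Fin n), f = g ∘ σ := by
  intro n
  induction n with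
  | zero => exact fun f g _ => ⟨1, funext fun i => i.elim0⟩
  | succ n ih =>
    intro f g h
    have hf0 : f 0 ∈ List.ofFn g := h.mem_iff.mp (by simp [List.mem_ofFn])
    obtain ⟨j, hj⟩ := List.mem_ofFn.mp hf0
    set τ : Equiv.Perm (Fin (n+1)) := Equiv.swap 0 j with hτ
    have hperm : List.Perm (List.ofFn f) (List.ofFn (g ∘ τ)) :=
      h.trans (Equiv.Perm.ofFn_comp_perm τ g).symm
    have hg0 : (g ∘ τ) 0 = f 0 := by simp [hτ, Equiv.swap_apply_left, hj]
    rw [List.ofFn_succ, List.ofFn_succ, hg0] at hperm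
    have htail : List.Perm (List.ofFn (f ∘ Fin.succ)) (List.ofFn ((g ∘ τ) ∘ Fin.succ)) := by
      have := hperm.cons_inv
      simpa [Function.comp_def] using this
    obtain ⟨σ', hσ'⟩ := ih (f ∘ Fin.succ) ((g ∘ τ) ∘ Fin.succ) htail
    refine ⟨(Equiv.Perm.decomposeFin.symm (0, σ')).trans τ, funext fun i => ?_⟩
    refine Fin.cases ?_ (fun i => ?_) i
    · simpa using hg0.symm
    · have := congrFun hσ' i
      simpa [Function.comp, Equiv.Perm.decomposeFin_symm_apply_succ] using this

private lemma exists_comp_perm_of_multiset_eq {α : Type*} {n : ℕ} {f g : Fin n → α}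
    (h : Multiset.map f Finset.univ.val = Multiset.map g Finset.univ.val) :
    ∃ σ : Equiv.Perm (Fin n), f = g ∘ σ := by
  apply exists_comp_perm_eq
  rw [Fin.univ_val_map, Fin.univ_val_map] at h
  exact Quotient.exact h

open Matrix BigOperators Finset

private lemma birkhoff_min {n : ℕ} {S : Matrix (Fin n) (Fin n) ℝ}
    (hS : S ∈ doublyStochastic ℝ (Fin n)) (c : Fin n → Fin n → ℝ) :
    ∃ σ : Equiv.Perm (Fin n), ∑ i, c i (σ i) ≤ ∑ i, ∑ j, S i j * c i j := by
  obtain ⟨w, hw0, hw1, hwS⟩ := exists_eq_sum_perm_of_mem_doublyStochastic hS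
  obtain ⟨σ₀, -, hmin⟩ := Finset.exists_min_image Finset.univ
    (fun σ : Equiv.Perm (Fin n) => ∑ i, c i (σ i)) ⟨1, Finset.mem_univ 1⟩
  refine ⟨σ₀, ?_⟩
  have key : ∀ σ : Equiv.Perm (Fin n),
      ∑ i, ∑ j, (Equiv.Perm.permMatrix ℝ σ i j) * c i j = ∑ i, c i (σ i) := by
    intro σ
    refine Finset.sum_congr rfl fun i _ => ?_
    simp [Equiv.Perm.permMatrix, PEquiv.toMatrix_apply, Option.mem_def, ite_mul,
      Equiv.toPEquiv_apply]
  have hSij : ∀ i j, S i j = ∑ σ : Equiv.Perm (Fin n), w σ * Equiv.Perm.permMatrix ℝ σ i j := by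
    intro i j
    rw [← hwS]
    simp [Matrix.sum_apply]
  calc ∑ i, c i (σ₀ i) = ∑ σ : Equiv.Perm (Fin n), w σ * ∑ i, c i (σ₀ i) := by
        rw [← Finset.sum_mul, hw1, one_mul]
    _ ≤ ∑ σ : Equiv.Perm (Fin n), w σ * ∑ i, c i (σ i) :=
        Finset.sum_le_sum fun σ _ => mul_le_mul_of_nonneg_left (hmin σ (Finset.mem_univ σ)) (hw0 σ)
    _ = ∑ σ : Equiv.Perm (Fin n), w σ * ∑ i, ∑ j, (Equiv.Perm.permMatrix ℝ σ i j) * c i j := by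
        simp_rw [key]
    _ = ∑ i, ∑ j, S i j * c i j := by
        simp_rw [hSij, Finset.mul_sum, Finset.sum_mul, mul_assoc]
        rw [Finset.sum_comm]
        exact Finset.sum_congr rfl fun i _ => Finset.sum_comm

open Matrix BigOperators Polynomial

private lemma norm_sq_re (z : ℂ) : ((starRingEnd ℂ) z * z).re = ‖z‖ ^ 2 := by
  rw [← Complex.normSq_eq_conj_mul_self, Complex.ofReal_re, Complex.sq_norm]

private lemma norm_sq_re' (z : ℂ) : (z * (starRingEnd ℂ) z).re = ‖z‖ ^ 2 := by
  rw [mul_comm]; exact norm_sq_re z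

private noncomputable def frob {n : ℕ} (M : Matrix (Fin n) (Fin n) ℂ) : ℝ :=
  ∑ i, ∑ j, ‖M i j‖ ^ 2

private lemma frob_eq_trace {n : ℕ} (M : Matrix (Fin n) (Fin n) ℂ) :
    frob M = (Matrix.trace (Mᴴ * M)).re := by
  simp only [frob, Matrix.trace, Matrix.diag, Matrix.mul_apply, Matrix.conjTranspose_apply,
    Complex.re_sum, Complex.star_def, norm_sq_re]
  exact Finset.sum_comm

private lemma frob_unitary_left {n : ℕ} (U M : Matrix (Fin n) (Fin n) ℂ)
    (hU : star U * U = 1) : frob (U * M) = frob M := by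
  rw [frob_eq_trace, frob_eq_trace, Matrix.conjTranspose_mul]
  rw [show Mᴴ * Uᴴ * (U * M) = Mᴴ * ((star U * U) * M) by
    rw [Matrix.star_eq_conjTranspose]; simp only [Matrix.mul_assoc]]
  rw [hU, Matrix.one_mul]

private lemma frob_unitary_right {n : ℕ} (M U : Matrix (Fin n) (Fin n) ℂ)
    (hU : U * star U = 1) : frob (M * U) = frob M := by
  rw [frob_eq_trace, frob_eq_trace, Matrix.conjTranspose_mul]
  rw [show Uᴴ * Mᴴ * (M * U) = Uᴴ * (Mᴴ * M * U) by simp only [Matrix.mul_assoc]]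
  have hU' : U * Uᴴ = 1 := by rw [Matrix.star_eq_conjTranspose] at hU; exact hU
  rw [Matrix.trace_mul_comm, Matrix.mul_assoc, hU', Matrix.mul_one]

private lemma frob_diag_comm {n : ℕ} (d e : Fin n → ℂ) (W : Matrix (Fin n) (Fin n) ℂ) :
    frob (Matrix.diagonal d * W - W * Matrix.diagonal e)
      = ∑ i, ∑ j, ‖W i j‖ ^ 2 * ‖d i - e j‖ ^ 2 := by
  unfold frob
  refine Finset.sum_congr rfl fun i _ => Finset.sum_congr rfl fun j _ => ?_
  rw [Matrix.sub_apply, Matrix.diagonal_mul, Matrix.mul_diagonal]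
  rw [show d i * W i j - W i j * e j = W i j * (d i - e j) by ring]
  rw [norm_mul, mul_pow]

private lemma unitary_sq_doublyStochastic {n : ℕ} (W : Matrix (Fin n) (Fin n) ℂ)
    (h1 : W * star W = 1) (h2 : star W * W = 1) :
    Matrix.of (fun i j => ‖W i j‖ ^ 2) ∈ doublyStochastic ℝ (Fin n) := by
  rw [mem_doublyStochastic]
  refine ⟨fun i j => by simp only [Matrix.of_apply]; positivity, ?_, ?_⟩
  · funext i
    have := congrArg (fun M => (M i i).re) h1
    simp only [Matrix.mul_apply, Matrix.one_apply_eq, Complex.one_re, Matrix.star_apply,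
      Complex.re_sum, Complex.star_def, norm_sq_re'] at this
    simpa [Matrix.mulVec, dotProduct] using this
  · funext j
    have := congrArg (fun M => (M j j).re) h2
    simp only [Matrix.mul_apply, Matrix.one_apply_eq, Complex.one_re, Matrix.star_apply,
      Complex.re_sum, Complex.star_def, norm_sq_re] at this
    simpa [Matrix.vecMul, dotProduct] using this

open Matrix BigOperators Polynomial

private lemma charpoly_diagonal {n : ℕ} (d : Fin n → ℂ) :
    (Matrix.diagonal d).charpoly = ∏ i, (X - C (d i)) := by
  rw [Matrix.charpoly]
  have : charmatrix (Matrix.diagonal d) = Matrix.diagonal (fun i => X - C (d i)) := by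
    ext i j
    by_cases h : i = j
    · subst h; simp [charmatrix_apply_eq]
    · simp [charmatrix_apply_ne _ _ _ h, Matrix.diagonal_apply_ne _ h, Matrix.diagonal_apply_ne d h]
  rw [this, Matrix.det_diagonal]

private lemma charpoly_unitary_conj {n : ℕ} (U D : Matrix (Fin n) (Fin n) ℂ)
    (h1 : U * star U = 1) : (U * D * star U).charpoly = D.charpoly := by
  have h2 : star U * U = 1 := mul_eq_one_comm.mp h1
  rw [Matrix.charpoly, Matrix.charpoly]
  have key : charmatrix (U * D * star U)
      = (U.map C) * charmatrix D * ((star U).map C) := by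
    unfold charmatrix
    simp only [RingHom.mapMatrix_apply]
    rw [Matrix.mul_sub, Matrix.sub_mul]
    congr 1
    · -- U.map C * scalar X * (star U).map C = scalar X
      rw [Matrix.scalar_apply, ← Matrix.smul_one_eq_diagonal, mul_smul_comm, smul_mul_assoc,
        Matrix.mul_one, ← Matrix.map_mul, h1, Matrix.map_one _ (map_zero C) (map_one C)]
    · rw [← Matrix.map_mul, ← Matrix.map_mul]
  rw [key, Matrix.det_mul, Matrix.det_mul, mul_comm, ← mul_assoc, ← Matrix.det_mul,
    ← Matrix.map_mul, h2, Matrix.map_one _ (map_zero C) (map_one C), Matrix.det_one, one_mul]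

open Matrix BigOperators Module.End

private lemma normal_op_diag {E : Type*} [NormedAddCommGroup E] [InnerProductSpace ℂ E]
    [FiniteDimensional ℂ E] {n : ℕ} (hn : Module.finrank ℂ E = n)
    (S T : E →ₗ[ℂ] E) (hS : S.IsSymmetric) (hT : T.IsSymmetric) (hST : Commute S T) :
    ∃ (b : OrthonormalBasis (Fin n) ℂ E) (d : Fin n → ℂ),
      ∀ i, S (b i) + Complex.I • T (b i) = d i • b i := by
  classical
  set V : Eigenvalues S × Eigenvalues T → Submodule ℂ E :=
    fun p => eigenspace S p.1.val ⊓ eigenspace T p.2.val with hVdef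
  have hfam : OrthogonalFamily ℂ (fun p => ↥(V p)) (fun p => (V p).subtypeₗᵢ) := by
    apply OrthogonalFamily.of_pairwise
    intro i j hij v hv
    obtain ⟨hv1, hv2⟩ := hv
    obtain (h₁ | h₂) : i.1 ≠ j.1 ∨ i.2 ≠ j.2 := by
      rwa [Ne.eq_def, Prod.ext_iff, not_and_or] at hij
    all_goals intro w hw; obtain ⟨hw1, hw2⟩ := hw
    · exact hS.orthogonalFamily_eigenspaces.pairwise
        (fun hc => h₁ (Subtype.ext hc)) hv1 w hw1
    · exact hT.orthogonalFamily_eigenspaces.pairwise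
        (fun hc => h₂ (Subtype.ext hc)) hv2 w hw2
  have htop : (⨆ p, V p) = ⊤ := by
    rw [← hS.iSup_iSup_eigenspace_inf_eigenspace_eq_top_of_commute hT hST]
    apply le_antisymm
    · exact iSup_le fun p => le_iSup₂_of_le p.1.val p.2.val le_rfl
    · refine iSup_le fun α => iSup_le fun γ => ?_
      by_cases hα : Module.End.HasEigenvalue S α
      · by_cases hγ : Module.End.HasEigenvalue T γ
        · exact le_iSup V (⟨⟨α, hα⟩, ⟨γ, hγ⟩⟩ : Eigenvalues S × Eigenvalues T)
        · have hbot : eigenspace T γ = ⊥ := by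
            by_contra hne
            exact hγ (Module.End.hasEigenvalue_iff.mpr hne)
          simp [hbot]
      · have hbot : eigenspace S α = ⊥ := by
          by_contra hne
          exact hα (Module.End.hasEigenvalue_iff.mpr hne)
        simp [hbot]
  have hint : DirectSum.IsInternal V := by
    rw [hfam.isInternal_iff, htop, Submodule.top_orthogonal_eq_bot]
  set b := hint.subordinateOrthonormalBasis hn hfam with hbdef
  set idx : Fin n → Eigenvalues S × Eigenvalues T :=
    fun i => hint.subordinateOrthonormalBasisIndex hn i hfam with hidxdef
  refine ⟨b, fun i => (idx i).1.val + Complex.I * (idx i).2.val, fun i => ?_⟩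
  have hbV : b i ∈ V (idx i) :=
    hint.subordinateOrthonormalBasis_subordinate hn i hfam
  have h1 : S (b i) = (idx i).1.val • b i := mem_eigenspace_iff.mp hbV.1
  have h2 : T (b i) = (idx i).2.val • b i := mem_eigenspace_iff.mp hbV.2
  rw [h1, h2, smul_smul, add_smul]

private lemma toEuclideanLin_mul {n : ℕ} (M N : Matrix (Fin n) (Fin n) ℂ) :
    Matrix.toEuclideanLin (M * N)
      = (Matrix.toEuclideanLin M) ∘ₗ (Matrix.toEuclideanLin N) := by
  apply LinearMap.ext
  intro v
  simp [Matrix.toEuclideanLin_apply, Matrix.mulVec_mulVec]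

private lemma normal_spectral {n : ℕ} (A : Matrix (Fin n) (Fin n) ℂ)
    (hA : A * Aᴴ = Aᴴ * A) :
    ∃ U : Matrix (Fin n) (Fin n) ℂ, U * star U = 1 ∧ star U * U = 1 ∧
      ∃ d : Fin n → ℂ, A = U * Matrix.diagonal d * star U := by
  classical
  set H : Matrix (Fin n) (Fin n) ℂ := (1/2 : ℂ) • (A + Aᴴ) with hHdef
  set K : Matrix (Fin n) (Fin n) ℂ := (-Complex.I/2) • (A - Aᴴ) with hKdef
  have hH : H.IsHermitian := by
    unfold Matrix.IsHermitian
    rw [hHdef, Matrix.conjTranspose_smul, Matrix.conjTranspose_add,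
      Matrix.conjTranspose_conjTranspose]
    congr 1
    · simp
    · rw [add_comm]
  have hK : K.IsHermitian := by
    unfold Matrix.IsHermitian
    rw [hKdef, Matrix.conjTranspose_smul, Matrix.conjTranspose_sub,
      Matrix.conjTranspose_conjTranspose]
    rw [show star (-Complex.I/2) = Complex.I/2 by simp]
    rw [show (Aᴴ - A) = -(A - Aᴴ) by abel]
    rw [smul_neg, ← neg_smul, neg_div]
  have hHK : H * K = K * H := by
    rw [hHdef, hKdef, Matrix.smul_mul, Matrix.mul_smul, Matrix.smul_mul, Matrix.mul_smul,
      smul_smul, smul_smul, mul_comm (-Complex.I/2) (1/2 : ℂ)]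
    congr 1
    rw [Matrix.add_mul, Matrix.mul_sub, Matrix.mul_sub, Matrix.sub_mul, Matrix.mul_add,
      Matrix.mul_add, hA]
    abel
  have hHiK : A = H + Complex.I • K := by
    rw [hHdef, hKdef, smul_smul]
    rw [show Complex.I * (-Complex.I/2) = (1/2 : ℂ) by
      linear_combination (-1/2 : ℂ) * Complex.I_mul_I]
    module
  set S := Matrix.toEuclideanLin H with hSdef
  set T := Matrix.toEuclideanLin K with hTdef
  have hS : LinearMap.IsSymmetric S := (Matrix.isHermitian_iff_isSymmetric).mp hH
  have hT : LinearMap.IsSymmetric T := (Matrix.isHermitian_iff_isSymmetric).mp hK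
  have hST : Commute S T := by
    unfold Commute SemiconjBy
    rw [show (S * T : Module.End ℂ (EuclideanSpace ℂ (Fin n))) = S ∘ₗ T from rfl,
      show (T * S : Module.End ℂ (EuclideanSpace ℂ (Fin n))) = T ∘ₗ S from rfl,
      hSdef, hTdef, ← toEuclideanLin_mul, ← toEuclideanLin_mul, hHK]
  have hn : Module.finrank ℂ (EuclideanSpace ℂ (Fin n)) = n := by
    simp [finrank_euclideanSpace]
  obtain ⟨b, d, hbd⟩ := normal_op_diag hn S T hS hT hST
  have hTb : ∀ i, Matrix.toEuclideanLin A (b i) = d i • b i := by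
    intro i
    have hlin : Matrix.toEuclideanLin A = S + Complex.I • T := by
      rw [hSdef, hTdef, hHiK]
      simp only [map_add, _root_.map_smul]
    rw [hlin]
    simpa using hbd i
  have hAb : ∀ j, A *ᵥ ⇑(b j) = d j • ⇑(b j) := by
    intro j
    simpa only [Matrix.toEuclideanLin_apply, WithLp.ofLp_smul] using congr(⇑$(hTb j))
  set Ub : Matrix (Fin n) (Fin n) ℂ :=
    (EuclideanSpace.basisFun (Fin n) ℂ).toBasis.toMatrix b.toBasis with hUbdef
  have hmem : Ub ∈ Matrix.unitaryGroup (Fin n) ℂ :=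
    (EuclideanSpace.basisFun (Fin n) ℂ).toMatrix_orthonormalBasis_mem_unitary b
  have hUU : Ub * star Ub = 1 := (Matrix.mem_unitaryGroup_iff).mp hmem
  have hUU' : star Ub * Ub = 1 := mul_eq_one_comm.mp hUU
  have hU_apply : ∀ i j, Ub i j = ⇑(b j) i := fun i j => rfl
  have hU_mulVec : ∀ j, Ub *ᵥ Pi.single j 1 = ⇑(b j) := by
    intro j
    funext i
    simp only [Matrix.mulVec_single, mul_one, MulOpposite.op_one, one_smul]
    exact hU_apply i j
  have hstarU_mulVec : ∀ j, (star Ub) *ᵥ ⇑(b j) = Pi.single j 1 := by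
    intro j
    rw [← hU_mulVec, Matrix.mulVec_mulVec, hUU', Matrix.one_mulVec]
  have hdiag : star Ub * A * Ub = Matrix.diagonal d := by
    apply Matrix.toEuclideanLin.injective
    apply Module.Basis.ext (EuclideanSpace.basisFun (Fin n) ℂ).toBasis
    intro i
    simp only [Matrix.toEuclideanLin_apply, OrthonormalBasis.coe_toBasis,
      EuclideanSpace.basisFun_apply, EuclideanSpace.ofLp_single, ← Matrix.mulVec_mulVec,
      hU_mulVec, hAb, Matrix.diagonal_mulVec_single, Matrix.mulVec_smul, hstarU_mulVec,
      WithLp.toLp_smul, EuclideanSpace.toLp_single, mul_one]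
    apply PiLp.ext
    intro j
    simp only [PiLp.smul_apply, EuclideanSpace.single_apply, smul_eq_mul, mul_ite, mul_one,
      mul_zero]
  refine ⟨Ub, hUU, hUU', d, ?_⟩
  rw [← hdiag]
  rw [show Ub * (star Ub * A * Ub) * star Ub = (Ub * star Ub) * A * (Ub * star Ub) by
    simp only [Matrix.mul_assoc], hUU, Matrix.one_mul, Matrix.mul_one]

/-- Hoffman–Wielandt inequality: let `A, B` be normal `n × n` complex
matrices with eigenvalues `μ 1, ..., μ n` and `ν 1, ..., ν n` respectively (listed with
multiplicity, i.e. the characteristic polynomials factor accordingly).  Then some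
permutation `σ` satisfies `∑ i |μ i - ν (σ i)|² ≤ ‖A - B‖²` (squared Frobenius norm). -/
theorem stmt13 (n : ℕ) (A B : Matrix (Fin n) (Fin n) ℂ)
    (hA : A * Aᴴ = Aᴴ * A) (hB : B * Bᴴ = Bᴴ * B)
    (μ ν : Fin n → ℂ)
    (hμ : A.charpoly = ∏ i : Fin n, (Polynomial.X - Polynomial.C (μ i)))
    (hν : B.charpoly = ∏ i : Fin n, (Polynomial.X - Polynomial.C (ν i))) :
    ∃ σ : Equiv.Perm (Fin n),
      ∑ i : Fin n, ‖μ i - ν (σ i)‖ ^ 2 ≤ ∑ i : Fin n, ∑ j : Fin n, ‖(A - B) i j‖ ^ 2 := by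
  classical
  obtain ⟨U, hU1, hU2, d, hAd⟩ := normal_spectral A hA
  obtain ⟨V, hV1, hV2, e, hBe⟩ := normal_spectral B hB
  -- identify eigenvalues up to permutation
  have prod_eq_multiset : ∀ f : Fin n → ℂ,
      (∏ i, (Polynomial.X - Polynomial.C (f i)))
        = (Multiset.map (fun a => Polynomial.X - Polynomial.C a)
            (Multiset.map f Finset.univ.val)).prod := by
    intro f
    rw [Multiset.map_map]
    rfl
  have multiset_of_charpoly : ∀ (M : Matrix (Fin n) (Fin n) ℂ) (f g : Fin n → ℂ),
      M.charpoly = ∏ i, (Polynomial.X - Polynomial.C (f i)) →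
      M.charpoly = ∏ i, (Polynomial.X - Polynomial.C (g i)) →
      ∃ σ : Equiv.Perm (Fin n), f = g ∘ σ := by
    intro M f g h1 h2
    apply exists_comp_perm_of_multiset_eq
    have h3 : (∏ i, (Polynomial.X - Polynomial.C (f i)))
        = ∏ i, (Polynomial.X - Polynomial.C (g i)) := by rw [← h1, h2]
    rw [prod_eq_multiset, prod_eq_multiset] at h3
    have := congrArg Polynomial.roots h3
    rwa [Polynomial.roots_multiset_prod_X_sub_C, Polynomial.roots_multiset_prod_X_sub_C] at this
  obtain ⟨σA, hσA⟩ := multiset_of_charpoly A μ d hμ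
    (by rw [hAd, charpoly_unitary_conj _ _ hU1, charpoly_diagonal])
  obtain ⟨σB, hσB⟩ := multiset_of_charpoly B ν e hν
    (by rw [hBe, charpoly_unitary_conj _ _ hV1, charpoly_diagonal])
  -- the doubly stochastic matrix
  set W : Matrix (Fin n) (Fin n) ℂ := star U * V with hWdef
  have hW1 : W * star W = 1 := by
    rw [hWdef, Matrix.star_mul, star_star, Matrix.mul_assoc, ← Matrix.mul_assoc V,
      hV1, Matrix.one_mul, hU2]
  have hW2 : star W * W = 1 := by
    rw [hWdef, Matrix.star_mul, star_star, Matrix.mul_assoc, ← Matrix.mul_assoc U,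
      hU1, Matrix.one_mul, hV2]
  obtain ⟨σ₀, hσ₀⟩ := birkhoff_min (unitary_sq_doublyStochastic W hW1 hW2)
    (fun i j => ‖d i - e j‖ ^ 2)
  -- Frobenius norm computation
  have hAB : A - B = U * (Matrix.diagonal d * W - W * Matrix.diagonal e) * star V := by
    rw [Matrix.mul_sub, Matrix.sub_mul, hAd, hBe]
    congr 1
    · rw [hWdef]
      simp only [Matrix.mul_assoc]
      rw [hV1, Matrix.mul_one]
    · rw [hWdef]
      simp only [Matrix.mul_assoc]
      rw [← Matrix.mul_assoc U (star U), hU1, Matrix.one_mul]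
  have hfrob : ∑ i, ∑ j, ‖(A - B) i j‖ ^ 2 = ∑ i, ∑ j, ‖W i j‖ ^ 2 * ‖d i - e j‖ ^ 2 := by
    have : ∑ i, ∑ j, ‖(A - B) i j‖ ^ 2 = frob (A - B) := rfl
    rw [this, hAB, frob_unitary_right _ _ (by
      rw [star_star]; exact mul_eq_one_comm.mp hV1), frob_unitary_left _ _ hU2, frob_diag_comm]
  refine ⟨σA.trans (σ₀.trans σB.symm), ?_⟩
  have hterm : ∀ i, ‖μ i - ν ((σA.trans (σ₀.trans σB.symm)) i)‖ ^ 2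
      = ‖d (σA i) - e (σ₀ (σA i))‖ ^ 2 := by
    intro i
    rw [hσA, hσB]
    simp [Function.comp]
  calc ∑ i, ‖μ i - ν ((σA.trans (σ₀.trans σB.symm)) i)‖ ^ 2
      = ∑ i, ‖d (σA i) - e (σ₀ (σA i))‖ ^ 2 := Finset.sum_congr rfl fun i _ => hterm i
    _ = ∑ j, ‖d j - e (σ₀ j)‖ ^ 2 := Equiv.sum_comp σA (fun j => ‖d j - e (σ₀ j)‖ ^ 2)
    _ ≤ ∑ i, ∑ j, (Matrix.of fun i j => ‖W i j‖ ^ 2) i j * ‖d i - e j‖ ^ 2 := hσ₀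
    _ = ∑ i, ∑ j, ‖(A - B) i j‖ ^ 2 := by rw [hfrob]; rfl
end

section
/- Let G be a graph on n vertices whose adjacency matrix A satisfies: all diagonal entries of A² equal n/2 + O(√n) except O(1) of them, and all off-diagonal entries of A² equal n/4 + O(√n) except O(n) of them. Then, with B = (n/4)(I + J) where J is the all-ones matrix, ‖A² − B‖² = O(n³) in Frobenius norm, and consequently (via Hoffman–Wielandt and λ_1 ≥ n/2 + O(√n)) the eigenvalues satisfy λ_1(G) = n/2 + O(√n) and |λ_2(G)| = O(n^{3/4}). -/
open scoped Classical

open Matrix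

section Stmt14Aux

lemma stmt14_parseval {n : ℕ} (b : OrthonormalBasis (Fin n) ℝ (EuclideanSpace ℝ (Fin n)))
    (x : EuclideanSpace ℝ (Fin n)) :
    ∑ i, (∑ k, b i k * x k)^2 = ∑ k, x k^2 := by
  have h := b.sum_inner_mul_inner x x
  simp only [PiLp.inner_apply, RCLike.inner_apply, conj_trivial] at h
  calc ∑ i, (∑ k, b i k * x k)^2
      = ∑ i, (∑ k, x k * b i k) * ∑ k, b i k * x k := by
        apply Finset.sum_congr rfl; intro i _
        rw [sq]; congr 1; apply Finset.sum_congr rfl; intros; ring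
    _ = ∑ k, x k ^ 2 := by
        rw [Finset.sum_congr rfl fun i _ => mul_comm (∑ k, x k * b i k) (∑ k, b i k * x k), h]
        apply Finset.sum_congr rfl; intros; ring

lemma stmt14_quadform {n : ℕ} (b : OrthonormalBasis (Fin n) ℝ (EuclideanSpace ℝ (Fin n)))
    (M : Matrix (Fin n) (Fin n) ℝ) (hM : Mᵀ = M) (μ : Fin n → ℝ)
    (h : ∀ i, M *ᵥ ⇑(b i) = μ i • ⇑(b i)) (x : EuclideanSpace ℝ (Fin n)) :
    (⇑x) ⬝ᵥ (M *ᵥ ⇑x) = ∑ i, μ i * (∑ k, b i k * x k)^2 := by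
  classical
  have key : ∀ i : Fin n, ∑ k, b i k * (M *ᵥ ⇑x) k = μ i * (∑ k, b i k * x k) := by
    intro i
    have e1 : (⇑(b i)) ⬝ᵥ (M *ᵥ ⇑x) = (M *ᵥ ⇑(b i)) ⬝ᵥ ⇑x := by
      rw [dotProduct_mulVec, show (⇑(b i)) ᵥ* M = M *ᵥ ⇑(b i) from by
        rw [← hM, vecMul_transpose, hM]]
    have e2 : (⇑(b i)) ⬝ᵥ (M *ᵥ ⇑x) = ∑ k, b i k * (M *ᵥ ⇑x) k := rfl
    rw [← e2, e1, h i, smul_dotProduct]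
    simp only [smul_eq_mul]
    rfl
  have h2 := b.sum_inner_mul_inner x ((WithLp.equiv 2 _).symm (M *ᵥ ⇑x))
  simp only [PiLp.inner_apply, RCLike.inner_apply, conj_trivial,
    WithLp.equiv_symm_apply, PiLp.toLp_apply] at h2
  calc (⇑x) ⬝ᵥ (M *ᵥ ⇑x) = ∑ k, x k * (M *ᵥ ⇑x) k := rfl
    _ = ∑ i, (∑ k, x k * b i k) * (∑ k, b i k * (M *ᵥ ⇑x) k) := by
        simpa only [mul_comm] using h2.symm
    _ = ∑ i, μ i * (∑ k, b i k * x k)^2 := by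
        apply Finset.sum_congr rfl; intro i _
        rw [key i, sq]
        have : (∑ k, x k * b i k) = ∑ k, b i k * x k := by
          apply Finset.sum_congr rfl; intros; ring
        rw [this]; ring

lemma stmt14_basis_norm {n : ℕ} (b : OrthonormalBasis (Fin n) ℝ (EuclideanSpace ℝ (Fin n)))
    (i : Fin n) : ∑ k, (b i k)^2 = 1 := by
  have h1 : ‖b i‖ = 1 := b.orthonormal.1 i
  have h2 := EuclideanSpace.norm_eq (b i)
  rw [h1] at h2
  have h3 : ∑ k, ‖b i k‖^2 = 1 := Real.sqrt_eq_one.mp h2.symm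
  simpa [Real.norm_eq_abs, sq_abs] using h3

lemma stmt14_quad_err {n : ℕ} (E : Matrix (Fin n) (Fin n) ℝ) (x : Fin n → ℝ) (F : ℝ)
    (hF : 0 ≤ F) (hE : ∑ i, ∑ j, (E i j)^2 ≤ F^2) :
    |x ⬝ᵥ (E *ᵥ x)| ≤ F * ∑ k, x k^2 := by
  have hxx : (0:ℝ) ≤ ∑ k, x k ^ 2 := Finset.sum_nonneg fun _ _ => sq_nonneg _
  have e1 : x ⬝ᵥ (E *ᵥ x) = ∑ p ∈ (Finset.univ ×ˢ Finset.univ : Finset (Fin n × Fin n)),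
      E p.1 p.2 * (x p.1 * x p.2) := by
    rw [Finset.sum_product]
    calc x ⬝ᵥ (E *ᵥ x) = ∑ i, x i * ∑ j, E i j * x j := rfl
      _ = ∑ i, ∑ j, E i j * (x i * x j) := by
          apply Finset.sum_congr rfl; intro i _
          rw [Finset.mul_sum]; apply Finset.sum_congr rfl; intros; ring
  have cs := Finset.sum_mul_sq_le_sq_mul_sq (Finset.univ ×ˢ Finset.univ)
    (fun p : Fin n × Fin n => E p.1 p.2) (fun p => x p.1 * x p.2)
  have e2 : ∑ p ∈ (Finset.univ ×ˢ Finset.univ : Finset (Fin n × Fin n)),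
      (x p.1 * x p.2)^2 = (∑ k, x k^2)^2 := by
    rw [Finset.sum_product, sq (∑ k, x k^2), Finset.sum_mul_sum]
    apply Finset.sum_congr rfl; intros; apply Finset.sum_congr rfl; intros; ring
  have e3 : ∑ p ∈ (Finset.univ ×ˢ Finset.univ : Finset (Fin n × Fin n)),
      (E p.1 p.2)^2 ≤ F^2 := by rw [Finset.sum_product]; exact hE
  have h4 : (x ⬝ᵥ (E *ᵥ x))^2 ≤ (F * ∑ k, x k^2)^2 := by
    rw [e1, mul_pow]
    calc (∑ p ∈ (Finset.univ ×ˢ Finset.univ : Finset (Fin n × Fin n)),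
        E p.1 p.2 * (x p.1 * x p.2))^2
        ≤ (∑ p ∈ (Finset.univ ×ˢ Finset.univ : Finset (Fin n × Fin n)), (E p.1 p.2)^2) *
          (∑ p ∈ (Finset.univ ×ˢ Finset.univ : Finset (Fin n × Fin n)), (x p.1 * x p.2)^2) := cs
      _ ≤ F^2 * (∑ k, x k^2)^2 := by
          rw [e2]
          exact mul_le_mul_of_nonneg_right e3 (sq_nonneg _)
  have h5 := Real.sqrt_le_sqrt h4
  rwa [Real.sqrt_sq_eq_abs, Real.sqrt_sq (mul_nonneg hF hxx)] at h5

lemma stmt14_perron {n : ℕ} (A : Matrix (Fin n) (Fin n) ℝ) (hA : Aᵀ = A)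
    (hpos : ∀ i j, 0 ≤ A i j)
    (b : OrthonormalBasis (Fin n) ℝ (EuclideanSpace ℝ (Fin n))) (μ : Fin n → ℝ)
    (h : ∀ i, A *ᵥ ⇑(b i) = μ i • ⇑(b i)) (i₀ : Fin n) (hmax : ∀ i, μ i ≤ μ i₀)
    (j : Fin n) : |μ j| ≤ μ i₀ := by
  have hnorm : ∀ i : Fin n, ∑ k, (b i k)^2 = 1 := stmt14_basis_norm b
  have ev : (⇑(b j)) ⬝ᵥ (A *ᵥ ⇑(b j)) = μ j := by
    rw [h j]
    have : (⇑(b j)) ⬝ᵥ (μ j • ⇑(b j)) = μ j * ∑ k, (b j k)^2 := by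
      simp [dotProduct, Finset.mul_sum]
      apply Finset.sum_congr rfl; intros; ring
    rw [this, hnorm j, mul_one]
  set w : EuclideanSpace ℝ (Fin n) := (WithLp.equiv 2 _).symm (fun k => |b j k|) with hw
  have hwk : ∀ k, w k = |b j k| := fun k => rfl
  have habs : |μ j| ≤ (⇑w) ⬝ᵥ (A *ᵥ ⇑w) := by
    rw [← ev]
    calc |(⇑(b j)) ⬝ᵥ (A *ᵥ ⇑(b j))| = |∑ k, ∑ l, b j k * (A k l * b j l)| := by
          congr 1
          calc (⇑(b j)) ⬝ᵥ (A *ᵥ ⇑(b j)) = ∑ k, b j k * ∑ l, A k l * b j l := rfl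
            _ = ∑ k, ∑ l, b j k * (A k l * b j l) := by
                apply Finset.sum_congr rfl; intros; rw [Finset.mul_sum]
      _ ≤ ∑ k, |∑ l, b j k * (A k l * b j l)| := Finset.abs_sum_le_sum_abs _ _
      _ ≤ ∑ k, ∑ l, |b j k * (A k l * b j l)| := by
          apply Finset.sum_le_sum; intros; exact Finset.abs_sum_le_sum_abs _ _
      _ = ∑ k, ∑ l, w k * (A k l * w l) := by
          apply Finset.sum_congr rfl; intro k _; apply Finset.sum_congr rfl; intro l _
          rw [hwk, hwk, abs_mul, abs_mul, abs_of_nonneg (hpos k l)]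
      _ = (⇑w) ⬝ᵥ (A *ᵥ ⇑w) := by
          calc ∑ k, ∑ l, w k * (A k l * w l) = ∑ k, w k * ∑ l, A k l * w l := by
                apply Finset.sum_congr rfl; intros; rw [Finset.mul_sum]
            _ = (⇑w) ⬝ᵥ (A *ᵥ ⇑w) := rfl
  have hq := stmt14_quadform b A hA μ h w
  have hwnorm : ∑ k, (w k)^2 = 1 := by
    rw [← hnorm j]; apply Finset.sum_congr rfl; intro k _; rw [hwk, sq_abs]
  have hub : (⇑w) ⬝ᵥ (A *ᵥ ⇑w) ≤ μ i₀ := by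
    rw [hq]
    calc ∑ i, μ i * (∑ k, b i k * w k)^2 ≤ ∑ i, μ i₀ * (∑ k, b i k * w k)^2 := by
          apply Finset.sum_le_sum; intro i _
          exact mul_le_mul_of_nonneg_right (hmax i) (sq_nonneg _)
      _ = μ i₀ * ∑ i, (∑ k, b i k * w k)^2 := by rw [Finset.mul_sum]
      _ = μ i₀ * 1 := by rw [stmt14_parseval b w, hwnorm]
      _ = μ i₀ := mul_one _
  exact habs.trans hub

lemma stmt14_quadB {n : ℕ} (x : Fin n → ℝ) :
    x ⬝ᵥ ((Matrix.of fun i j => if i = j then (n:ℝ)/2 else (n:ℝ)/4) *ᵥ x)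
      = (n:ℝ)/4 * ((∑ k, x k)^2 + ∑ k, x k^2) := by
  have inner : ∀ i, (∑ j, (if i = j then (n:ℝ)/2 else (n:ℝ)/4) * x j)
      = (n:ℝ)/4 * (∑ j, x j) + (n:ℝ)/4 * x i := by
    intro i
    have e : ∀ j, (if i = j then (n:ℝ)/2 else (n:ℝ)/4) * x j
        = (n:ℝ)/4 * x j + (if i = j then (n:ℝ)/4 * x j else 0) := by
      intro j; by_cases h : i = j
      · simp [h]; ring
      · simp [h]
    rw [Finset.sum_congr rfl fun j _ => e j, Finset.sum_add_distrib,
      Finset.sum_ite_eq Finset.univ i (fun j => (n:ℝ)/4 * x j), ← Finset.mul_sum]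
    simp
  calc x ⬝ᵥ ((Matrix.of fun i j => if i = j then (n:ℝ)/2 else (n:ℝ)/4) *ᵥ x)
      = ∑ i, x i * (∑ j, (if i = j then (n:ℝ)/2 else (n:ℝ)/4) * x j) := rfl
    _ = ∑ i, ((n:ℝ)/4 * (∑ j, x j) * x i + (n:ℝ)/4 * x i^2) := by
        apply Finset.sum_congr rfl; intro i _; rw [inner i]; ring
    _ = (n:ℝ)/4 * ((∑ k, x k)^2 + ∑ k, x k^2) := by
        rw [Finset.sum_add_distrib, ← Finset.mul_sum, ← Finset.mul_sum]; ring

lemma stmt14_abs_le_of_sq {a b : ℝ} (h : a^2 ≤ b^2) (hb : 0 ≤ b) : |a| ≤ b := by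
  have h5 := Real.sqrt_le_sqrt h
  rwa [Real.sqrt_sq_eq_abs, Real.sqrt_sq hb] at h5

end Stmt14Aux

set_option maxHeartbeats 2000000 in
/-- given constants `c₁, c₂, c₃, c₄ > 0` there is `C > 0` such that the
following holds.  Let `G` be a graph on `n ≥ 1` vertices with adjacency matrix `A` such
that all diagonal entries of `A²` are `n/2 + O(√n)` except at most `c₂` of them (`O(1)`),
and all off-diagonal entries of `A²` are `n/4 + O(√n)` except at most `c₄ n` of them
(`O(n)`).  Then, with `B = (n/4)(I + J)` (diagonal entries `n/2`, off-diagonal `n/4`),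
the squared Frobenius norm `‖A² - B‖² ≤ C n³`, and consequently the eigenvalues of `A`
satisfy `λ₁ = n/2 + O(√n)` while all the others are `O(n^{3/4})` in absolute value. -/
theorem stmt14 (c₁ c₂ c₃ c₄ : ℝ) (h₁ : 0 < c₁) (h₂ : 0 < c₂) (h₃ : 0 < c₃) (h₄ : 0 < c₄) :
    ∃ C > (0 : ℝ), ∀ (n : ℕ), 1 ≤ n → ∀ (G : SimpleGraph (Fin n))
      (hA : (G.adjMatrix ℝ).IsHermitian)
      (D : Finset (Fin n)) (P : Finset (Fin n × Fin n)),
      ((D.card : ℝ) ≤ c₂) →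
      (∀ u : Fin n, u ∉ D →
        |(G.adjMatrix ℝ * G.adjMatrix ℝ) u u - (n : ℝ) / 2| ≤ c₁ * Real.sqrt n) →
      ((P.card : ℝ) ≤ c₄ * n) →
      (∀ u v : Fin n, u ≠ v → (u, v) ∉ P →
        |(G.adjMatrix ℝ * G.adjMatrix ℝ) u v - (n : ℝ) / 4| ≤ c₃ * Real.sqrt n) →
      ((∑ i : Fin n, ∑ j : Fin n,
          ((G.adjMatrix ℝ * G.adjMatrix ℝ) i j -
            (if i = j then (n : ℝ) / 2 else (n : ℝ) / 4)) ^ 2) ≤ C * (n : ℝ) ^ 3 ∧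
       ∃ i₀ : Fin n, |hA.eigenvalues i₀ - (n : ℝ) / 2| ≤ C * Real.sqrt n ∧
         ∀ i : Fin n, i ≠ i₀ → |hA.eigenvalues i| ≤ C * (n : ℝ) ^ ((3 : ℝ) / 4)) := by
  classical
  set K₀ : ℝ := c₁^2 + c₂ + c₃^2 + c₄ with hK₀def
  have hK₀pos : 0 < K₀ := by positivity
  set r : ℝ := Real.sqrt K₀ with hrdef
  have hrpos : 0 < r := Real.sqrt_pos.mpr hK₀pos
  set K₁ : ℝ := 1/2 + 3*r with hK₁def
  have hK₁pos : 0 < K₁ := by positivity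
  set K₂ : ℝ := 1/4 + r with hK₂def
  have hK₂pos : 0 < K₂ := by positivity
  set C : ℝ := K₀ + Real.sqrt K₁ + 2*K₂ + 1 with hCdef
  have hsK₁ : 0 ≤ Real.sqrt K₁ := Real.sqrt_nonneg _
  have hCpos : 0 < C := by positivity
  refine ⟨C, hCpos, ?_⟩
  intro n hn G hA D P hD hdiag hP hoff
  have hnn0 : (0:ℝ) ≤ (n:ℝ) := Nat.cast_nonneg n
  have hnn1 : (1:ℝ) ≤ (n:ℝ) := by exact_mod_cast hn
  have hnnpos : (0:ℝ) < (n:ℝ) := by linarith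
  have hs0 : (0:ℝ) ≤ Real.sqrt n := Real.sqrt_nonneg _
  have hs1 : (1:ℝ) ≤ Real.sqrt n := by
    rw [show (1:ℝ) = Real.sqrt 1 by simp]; exact Real.sqrt_le_sqrt hnn1
  set A : Matrix (Fin n) (Fin n) ℝ := G.adjMatrix ℝ with hAdef
  set M : Matrix (Fin n) (Fin n) ℝ := A * A with hMdef
  set Bm : Matrix (Fin n) (Fin n) ℝ :=
    Matrix.of (fun i j => if i = j then (n:ℝ)/2 else (n:ℝ)/4) with hBmdef
  -- basic entry facts
  have hA01 : ∀ i j, A i j = 0 ∨ A i j = 1 := by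
    intro i j; by_cases h : G.Adj i j
    · right; simp [hAdef, h]
    · left; simp [hAdef, h]
  have hApos : ∀ i j, 0 ≤ A i j := by
    intro i j; rcases hA01 i j with h | h <;> rw [h] <;> norm_num
  have hA1 : ∀ i j, A i j ≤ 1 := by
    intro i j; rcases hA01 i j with h | h <;> rw [h] <;> norm_num
  have hM0 : ∀ i j, 0 ≤ M i j := by
    intro i j; rw [hMdef, Matrix.mul_apply]
    exact Finset.sum_nonneg fun k _ => mul_nonneg (hApos i k) (hApos k j)
  have hMn : ∀ i j, M i j ≤ (n:ℝ) := by
    intro i j; rw [hMdef, Matrix.mul_apply]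
    calc ∑ k, A i k * A k j ≤ ∑ _k : Fin n, (1:ℝ) :=
          Finset.sum_le_sum fun k _ =>
            mul_le_one₀ (hA1 i k) (hApos k j) (hA1 k j)
      _ = (n:ℝ) := by simp
  have hBm01 : ∀ i j, 0 ≤ Bm i j ∧ Bm i j ≤ (n:ℝ) := by
    intro i j; by_cases h : i = j <;> constructor <;> simp [hBmdef, h] <;> linarith
  have hsq_all : ∀ i j, (M i j - Bm i j)^2 ≤ (n:ℝ)^2 := by
    intro i j
    have h1 := hM0 i j; have h2 := hMn i j; have h3 := hBm01 i j
    apply sq_le_sq' <;> [linarith [h3.2]; linarith [h3.1]]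
  have hdiag' : ∀ i, i ∉ D → (M i i - Bm i i)^2 ≤ c₁^2 * n := by
    intro i hi
    have h := abs_le.mp (hdiag i hi)
    have hb : Bm i i = (n:ℝ)/2 := by simp [hBmdef]
    rw [hb]
    calc (M i i - (n:ℝ)/2)^2 ≤ (c₁ * Real.sqrt n)^2 := by
          apply sq_le_sq' <;> [linarith [h.1]; linarith [h.2]]
      _ = c₁^2 * n := by rw [mul_pow, Real.sq_sqrt hnn0]
  have hoff' : ∀ i j, i ≠ j → (i, j) ∉ P → (M i j - Bm i j)^2 ≤ c₃^2 * n := by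
    intro i j hij hp
    have h := abs_le.mp (hoff i j hij hp)
    have hb : Bm i j = (n:ℝ)/4 := by simp [hBmdef, hij]
    rw [hb]
    calc (M i j - (n:ℝ)/4)^2 ≤ (c₃ * Real.sqrt n)^2 := by
          apply sq_le_sq' <;> [linarith [h.1]; linarith [h.2]]
      _ = c₃^2 * n := by rw [mul_pow, Real.sq_sqrt hnn0]
  have hc₁n : 0 ≤ c₁^2 * (n:ℝ) := by positivity
  have hc₃n : 0 ≤ c₃^2 * (n:ℝ) := by positivity
  have hpt : ∀ i j, (M i j - Bm i j)^2 ≤ (c₁^2 + c₃^2) * n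
      + (if i ∈ D then (n:ℝ)^2 else 0) + (if (i,j) ∈ P then (n:ℝ)^2 else 0) := by
    intro i j
    have h1 : (0:ℝ) ≤ (if i ∈ D then (n:ℝ)^2 else 0) := by positivity
    have h2 : (0:ℝ) ≤ (if (i,j) ∈ P then (n:ℝ)^2 else 0) := by positivity
    by_cases hij : i = j
    · subst hij
      by_cases hiD : i ∈ D
      · rw [if_pos hiD]; have := hsq_all i i; linarith [hc₁n, hc₃n, h2]
      · have := hdiag' i hiD; rw [if_neg hiD]; linarith [hc₃n, h2]
    · by_cases hiP : (i,j) ∈ P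
      · rw [if_pos hiP]; have := hsq_all i j; linarith [hc₁n, hc₃n, h1]
      · rw [if_neg hiP]; have := hoff' i j hij hiP; linarith [hc₁n, h1]
  have frob : (∑ i, ∑ j, (M i j - Bm i j)^2) ≤ K₀ * (n:ℝ)^3 := by
    have T1 : ∑ _i : Fin n, ∑ _j : Fin n, (c₁^2+c₃^2) * (n:ℝ) = (c₁^2+c₃^2) * (n:ℝ)^3 := by
      simp [Finset.sum_const, Finset.card_univ, nsmul_eq_mul]; ring
    have T2 : ∑ _i : Fin n, ∑ _j : Fin n, (0:ℝ) = 0 := by simp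
    have e2 : ∑ i : Fin n, ∑ _j : Fin n, (if i ∈ D then (n:ℝ)^2 else 0)
        = (n:ℝ) * (D.card * (n:ℝ)^2) := by
      have e : ∀ i : Fin n, ∑ _j : Fin n, (if i ∈ D then (n:ℝ)^2 else 0)
          = (n:ℝ) * (if i ∈ D then (n:ℝ)^2 else 0) := by
        intro i; simp [Finset.sum_const, Finset.card_univ, nsmul_eq_mul]
      rw [Finset.sum_congr rfl fun i _ => e i, ← Finset.mul_sum]
      congr 1
      rw [Finset.sum_ite_mem, Finset.univ_inter, Finset.sum_const, nsmul_eq_mul]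
    have e3 : ∑ i : Fin n, ∑ j : Fin n, (if (i,j) ∈ P then (n:ℝ)^2 else 0)
        ≤ (P.card : ℝ) * (n:ℝ)^2 := by
      rw [← Finset.sum_product']
      rw [show (∑ p ∈ (Finset.univ ×ˢ Finset.univ : Finset (Fin n × Fin n)),
          (if p ∈ P then (n:ℝ)^2 else 0))
        = ∑ p ∈ (Finset.univ ×ˢ Finset.univ : Finset (Fin n × Fin n)) ∩ P, (n:ℝ)^2
        from Finset.sum_ite_mem _ _ _]
      rw [Finset.sum_const, nsmul_eq_mul]
      have hcard : (((Finset.univ ×ˢ Finset.univ : Finset (Fin n × Fin n)) ∩ P).card : ℝ)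
          ≤ (P.card : ℝ) := by
        exact_mod_cast Finset.card_le_card (Finset.inter_subset_right)
      exact mul_le_mul_of_nonneg_right hcard (sq_nonneg _)
    calc (∑ i, ∑ j, (M i j - Bm i j)^2)
        ≤ ∑ i : Fin n, ∑ j : Fin n, ((c₁^2 + c₃^2) * (n:ℝ)
            + (if i ∈ D then (n:ℝ)^2 else 0) + (if (i,j) ∈ P then (n:ℝ)^2 else 0)) := by
          apply Finset.sum_le_sum; intro i _; apply Finset.sum_le_sum; intro j _
          exact hpt i j
      _ = (∑ _i : Fin n, ∑ _j : Fin n, (c₁^2+c₃^2) * (n:ℝ))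
          + (∑ i : Fin n, ∑ _j : Fin n, (if i ∈ D then (n:ℝ)^2 else 0))
          + (∑ i : Fin n, ∑ j : Fin n, (if (i,j) ∈ P then (n:ℝ)^2 else 0)) := by
          simp only [Finset.sum_add_distrib]
      _ ≤ (c₁^2+c₃^2) * (n:ℝ)^3 + (n:ℝ) * (c₂ * (n:ℝ)^2) + (c₄ * (n:ℝ)) * (n:ℝ)^2 := by
          rw [T1, e2]
          have h2' : (n:ℝ) * ((D.card:ℝ) * (n:ℝ)^2) ≤ (n:ℝ) * (c₂ * (n:ℝ)^2) :=
            mul_le_mul_of_nonneg_left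
              (mul_le_mul_of_nonneg_right hD (sq_nonneg _)) hnn0
          have h3' := le_trans e3 (mul_le_mul_of_nonneg_right hP (sq_nonneg _))
          linarith
      _ ≤ K₀ * (n:ℝ)^3 := le_of_eq (by rw [hK₀def]; ring)

  -- eigenvalue part
  set lam : Fin n → ℝ := hA.eigenvalues with hlamdef
  set b := hA.eigenvectorBasis with hbdef
  have hAsym : Aᵀ = A := by
    ext i j
    have h := congrFun (congrFun hA j) i
    simpa [Matrix.conjTranspose_apply, Matrix.transpose_apply] using h.symm
  have hMsym : Mᵀ = M := by rw [hMdef, Matrix.transpose_mul, hAsym]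
  have heig : ∀ i, A *ᵥ ⇑(b i) = lam i • ⇑(b i) := fun i => hA.mulVec_eigenvectorBasis i
  have heig2 : ∀ i, M *ᵥ ⇑(b i) = (lam i^2) • ⇑(b i) := by
    intro i
    rw [hMdef, ← Matrix.mulVec_mulVec, heig i, Matrix.mulVec_smul, heig i, smul_smul, sq]
  have hbn := stmt14_basis_norm b
  set F : ℝ := Real.sqrt (K₀ * (n:ℝ)^3) with hFdef
  have hF0 : 0 ≤ F := Real.sqrt_nonneg _
  have hF2 : F^2 = K₀ * (n:ℝ)^3 := Real.sq_sqrt (by positivity)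
  have hFr : F = r * ((n:ℝ) * Real.sqrt n) := by
    have e : K₀ * (n:ℝ)^3 = (r * ((n:ℝ) * Real.sqrt n))^2 := by
      rw [mul_pow, mul_pow, hrdef, Real.sq_sqrt hK₀pos.le, Real.sq_sqrt hnn0]; ring
    rw [hFdef, e, Real.sqrt_sq (by positivity)]
  have hEsum : ∑ i, ∑ j, ((M - Bm) i j)^2 ≤ F^2 := by
    rw [hF2]; simpa [Matrix.sub_apply] using frob
  have herr : ∀ x : EuclideanSpace ℝ (Fin n),
      |(⇑x) ⬝ᵥ (M *ᵥ ⇑x) - (n:ℝ)/4 * ((∑ k, x k)^2 + ∑ k, x k^2)| ≤ F * ∑ k, x k^2 := by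
    intro x
    have h1 : (⇑x) ⬝ᵥ (M *ᵥ ⇑x) - (⇑x) ⬝ᵥ (Bm *ᵥ ⇑x) = (⇑x) ⬝ᵥ ((M - Bm) *ᵥ ⇑x) := by
      rw [Matrix.sub_mulVec, dotProduct_sub]
    have h2 : (⇑x) ⬝ᵥ (Bm *ᵥ ⇑x) = (n:ℝ)/4 * ((∑ k, x k)^2 + ∑ k, x k^2) :=
      stmt14_quadB _
    rw [← h2, h1]
    exact stmt14_quad_err (M - Bm) _ F hF0 hEsum
  set one : EuclideanSpace ℝ (Fin n) := (WithLp.equiv 2 _).symm (fun _ => (1:ℝ)) with honedef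
  have hone : ∀ k, one k = 1 := fun k => rfl
  have honesum : ∑ k, one k = (n:ℝ) := by simp [hone]
  have honesq : ∑ k, (one k)^2 = (n:ℝ) := by simp [hone]
  have hpar : ∑ i, (∑ k, b i k)^2 = (n:ℝ) := by
    have h := stmt14_parseval b one
    rw [honesq] at h
    rw [← h]
    apply Finset.sum_congr rfl; intro i _
    congr 1; apply Finset.sum_congr rfl; intro k _; rw [hone, mul_one]
  have hq1 : (⇑one) ⬝ᵥ (M *ᵥ ⇑one) = ∑ i, lam i^2 * (∑ k, b i k)^2 := by
    have h := stmt14_quadform b M hMsym (fun i => lam i^2) heig2 one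
    rw [h]
    apply Finset.sum_congr rfl; intro i _
    congr 2; apply Finset.sum_congr rfl; intro k _; rw [hone, mul_one]
  have hone_err : |(∑ i, lam i^2 * (∑ k, b i k)^2) - (n:ℝ)/4 * ((n:ℝ)^2 + (n:ℝ))|
      ≤ F * (n:ℝ) := by
    have h := herr one
    rw [hq1, honesum, honesq] at h
    exact h
  have hper_i : ∀ i, |lam i^2 - (n:ℝ)/4 * ((∑ k, b i k)^2 + 1)| ≤ F := by
    intro i
    have h := herr (b i)
    have e : (⇑(b i)) ⬝ᵥ (M *ᵥ ⇑(b i)) = lam i ^ 2 := by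
      rw [heig2 i]
      have e2 : (⇑(b i)) ⬝ᵥ ((lam i^2) • ⇑(b i)) = lam i^2 * ∑ k, (b i k)^2 := by
        simp [dotProduct, Finset.mul_sum]
        apply Finset.sum_congr rfl; intros; ring
      rw [e2, hbn i, mul_one]
    rw [e, hbn i, mul_one] at h
    exact h
  obtain ⟨i₀, -, hmax⟩ := Finset.exists_max_image (Finset.univ : Finset (Fin n)) lam
    ⟨⟨0, hn⟩, Finset.mem_univ _⟩
  have hperron : ∀ j, |lam j| ≤ lam i₀ := fun j =>
    stmt14_perron A hAsym hApos b lam heig i₀ (fun i => hmax i (Finset.mem_univ i)) j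
  have frob' : (∑ i : Fin n, ∑ j : Fin n,
      (M i j - (if i = j then (n : ℝ) / 2 else (n : ℝ) / 4)) ^ 2) ≤ K₀ * (n:ℝ)^3 := by
    have e : ∀ i j : Fin n, Bm i j = (if i = j then (n : ℝ) / 2 else (n : ℝ) / 4) :=
      fun i j => rfl
    calc (∑ i : Fin n, ∑ j : Fin n,
        (M i j - (if i = j then (n : ℝ) / 2 else (n : ℝ) / 4)) ^ 2)
        = ∑ i, ∑ j, (M i j - Bm i j)^2 := by
          apply Finset.sum_congr rfl; intro i _; apply Finset.sum_congr rfl; intro j _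
          rw [e i j]
      _ ≤ K₀ * (n:ℝ)^3 := frob
  refine ⟨?_, i₀, ?_, ?_⟩
  · -- Frobenius part of the goal
    refine le_trans frob' ?_
    have hKC : K₀ ≤ C := by rw [hCdef]; linarith [hsK₁, hK₂pos]
    have h3 : (0:ℝ) ≤ (n:ℝ)^3 := by positivity
    exact mul_le_mul_of_nonneg_right hKC h3
  · -- top eigenvalue
    have hL0 : 0 ≤ lam i₀ := le_trans (abs_nonneg _) (hperron i₀)
    have hLsq : ∀ j, lam j ^2 ≤ lam i₀ ^2 := by
      intro j
      have h := pow_le_pow_left₀ (abs_nonneg (lam j)) (hperron j) 2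
      rwa [sq_abs] at h
    have hsum_le : ∑ i, lam i^2 * (∑ k, b i k)^2 ≤ lam i₀^2 * (n:ℝ) := by
      calc ∑ i, lam i^2 * (∑ k, b i k)^2 ≤ ∑ i, lam i₀^2 * (∑ k, b i k)^2 :=
            Finset.sum_le_sum fun i _ => mul_le_mul_of_nonneg_right (hLsq i) (sq_nonneg _)
        _ = lam i₀^2 * ∑ i, (∑ k, b i k)^2 := by rw [Finset.mul_sum]
        _ = lam i₀^2 * (n:ℝ) := by rw [hpar]
    have habs1 := abs_le.mp hone_err
    have hL2lb : (n:ℝ)^2/4 - F ≤ lam i₀^2 := by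
      have h1 : ((n:ℝ)^2/4 - F) * (n:ℝ) ≤ lam i₀^2 * (n:ℝ) := by
        calc ((n:ℝ)^2/4 - F) * (n:ℝ) ≤ (n:ℝ)/4 * ((n:ℝ)^2 + (n:ℝ)) - F * (n:ℝ) := by
              linarith [sq_nonneg (n:ℝ)]
          _ ≤ ∑ i, lam i^2 * (∑ k, b i k)^2 := by linarith [habs1.1]
          _ ≤ lam i₀^2 * (n:ℝ) := hsum_le
      exact le_of_mul_le_mul_right h1 hnnpos
    have hSle : (∑ k, b i₀ k)^2 ≤ (n:ℝ) := by
      rw [← hpar]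
      exact Finset.single_le_sum (f := fun i => (∑ k, b i k)^2)
        (fun _ _ => sq_nonneg _) (Finset.mem_univ i₀)
    have hper0 := abs_le.mp (hper_i i₀)
    have hLub : lam i₀^2 ≤ (n:ℝ)^2/4 + (n:ℝ)/4 + F := by
      have hm := mul_le_mul_of_nonneg_left hSle (show (0:ℝ) ≤ (n:ℝ)/4 by positivity)
      linarith [hper0.2, hm]
    have habsL : |lam i₀^2 - (n:ℝ)^2/4| ≤ (n:ℝ)/4 + F :=
      abs_le.mpr ⟨by linarith, by linarith⟩
    have hnsq : (n:ℝ) ≤ (n:ℝ) * Real.sqrt n := by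
      calc (n:ℝ) = (n:ℝ) * 1 := (mul_one _).symm
        _ ≤ (n:ℝ) * Real.sqrt n := mul_le_mul_of_nonneg_left hs1 hnn0
    have hbound : (n:ℝ)/4 + F ≤ K₂ * ((n:ℝ) * Real.sqrt n) := by
      rw [hFr, hK₂def]; linarith [hnsq]
    have e : |lam i₀ - (n:ℝ)/2| * (lam i₀ + (n:ℝ)/2) = |lam i₀^2 - (n:ℝ)^2/4| := by
      rw [← abs_of_nonneg (show (0:ℝ) ≤ lam i₀ + (n:ℝ)/2 by linarith), ← abs_mul]
      congr 1; ring
    have h2 : |lam i₀ - (n:ℝ)/2| * ((n:ℝ)/2) ≤ K₂ * ((n:ℝ) * Real.sqrt n) := by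
      have hst : |lam i₀ - (n:ℝ)/2| * ((n:ℝ)/2) ≤ |lam i₀ - (n:ℝ)/2| * (lam i₀ + (n:ℝ)/2) :=
        mul_le_mul_of_nonneg_left (by linarith) (abs_nonneg _)
      calc |lam i₀ - (n:ℝ)/2| * ((n:ℝ)/2) ≤ |lam i₀^2 - (n:ℝ)^2/4| := by rw [← e]; exact hst
        _ ≤ (n:ℝ)/4 + F := habsL
        _ ≤ K₂ * ((n:ℝ) * Real.sqrt n) := hbound
    have h3 : |lam i₀ - (n:ℝ)/2| ≤ 2*K₂ * Real.sqrt n := by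
      have h4 : |lam i₀ - (n:ℝ)/2| * ((n:ℝ)/2) ≤ (2*K₂ * Real.sqrt n) * ((n:ℝ)/2) := by
        calc |lam i₀ - (n:ℝ)/2| * ((n:ℝ)/2) ≤ K₂ * ((n:ℝ) * Real.sqrt n) := h2
          _ = (2*K₂ * Real.sqrt n) * ((n:ℝ)/2) := by ring
      exact le_of_mul_le_mul_right h4 (by linarith)
    calc |lam i₀ - (n:ℝ)/2| ≤ 2*K₂ * Real.sqrt n := h3
      _ ≤ C * Real.sqrt n := by
          apply mul_le_mul_of_nonneg_right _ hs0
          rw [hCdef]; linarith [hK₀pos, hsK₁]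
  · -- other eigenvalues
    intro i hne
    have hL0 : 0 ≤ lam i₀ := le_trans (abs_nonneg _) (hperron i₀)
    have hLsq : ∀ j, lam j ^2 ≤ lam i₀ ^2 := by
      intro j
      have h := pow_le_pow_left₀ (abs_nonneg (lam j)) (hperron j) 2
      rwa [sq_abs] at h
    have hsum_le : ∑ j, lam j^2 * (∑ k, b j k)^2 ≤ lam i₀^2 * (n:ℝ) := by
      calc ∑ j, lam j^2 * (∑ k, b j k)^2 ≤ ∑ j, lam i₀^2 * (∑ k, b j k)^2 :=
            Finset.sum_le_sum fun j _ => mul_le_mul_of_nonneg_right (hLsq j) (sq_nonneg _)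
        _ = lam i₀^2 * ∑ j, (∑ k, b j k)^2 := by rw [Finset.mul_sum]
        _ = lam i₀^2 * (n:ℝ) := by rw [hpar]
    have habs1 := abs_le.mp hone_err
    have hL2lb : (n:ℝ)^2/4 - F ≤ lam i₀^2 := by
      have h1 : ((n:ℝ)^2/4 - F) * (n:ℝ) ≤ lam i₀^2 * (n:ℝ) := by
        calc ((n:ℝ)^2/4 - F) * (n:ℝ) ≤ (n:ℝ)/4 * ((n:ℝ)^2 + (n:ℝ)) - F * (n:ℝ) := by
              linarith [sq_nonneg (n:ℝ)]
          _ ≤ ∑ j, lam j^2 * (∑ k, b j k)^2 := by linarith [habs1.1]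
          _ ≤ lam i₀^2 * (n:ℝ) := hsum_le
      exact le_of_mul_le_mul_right h1 hnnpos
    have hper0 := abs_le.mp (hper_i i₀)
    have hperi := abs_le.mp (hper_i i)
    have hpair : (∑ k, b i k)^2 + (∑ k, b i₀ k)^2 ≤ (n:ℝ) := by
      rw [← hpar]
      rw [show (∑ k, b i k)^2 + (∑ k, b i₀ k)^2
          = ∑ j ∈ ({i, i₀} : Finset (Fin n)), (∑ k, b j k)^2 from (Finset.sum_pair (f := fun j => (∑ k, b j k)^2) hne).symm]
      exact Finset.sum_le_sum_of_subset_of_nonneg (Finset.subset_univ _)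
        (fun j _ _ => sq_nonneg _)
    have hp4 := mul_le_mul_of_nonneg_left hpair (show (0:ℝ) ≤ (n:ℝ)/4 by positivity)
    have key : lam i^2 ≤ (n:ℝ)/2 + 3*F := by
      linarith [hL2lb, hper0.1, hper0.2, hperi.1, hperi.2, hp4]
    have hnsq : (n:ℝ) ≤ (n:ℝ) * Real.sqrt n := by
      calc (n:ℝ) = (n:ℝ) * 1 := (mul_one _).symm
        _ ≤ (n:ℝ) * Real.sqrt n := mul_le_mul_of_nonneg_left hs1 hnn0
    have key2 : lam i^2 ≤ K₁ * ((n:ℝ) * Real.sqrt n) := by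
      rw [hK₁def]
      calc lam i^2 ≤ (n:ℝ)/2 + 3*F := key
        _ ≤ (1/2) * ((n:ℝ) * Real.sqrt n) + 3*(r * ((n:ℝ) * Real.sqrt n)) := by
            rw [← hFr]; linarith
        _ = (1/2 + 3*r) * ((n:ℝ) * Real.sqrt n) := by ring
    have ht : ((n:ℝ) ^ ((3:ℝ)/4))^2 = (n:ℝ) * Real.sqrt n := by
      rw [← Real.rpow_natCast ((n:ℝ) ^ ((3:ℝ)/4)) 2, ← Real.rpow_mul hnn0]
      rw [Real.sqrt_eq_rpow]
      rw [show (n:ℝ) * (n:ℝ)^((1:ℝ)/2) = (n:ℝ)^(1:ℝ) * (n:ℝ)^((1:ℝ)/2) by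
        rw [Real.rpow_one], ← Real.rpow_add hnnpos]
      norm_num
    have ht0 : 0 ≤ (n:ℝ) ^ ((3:ℝ)/4) := Real.rpow_nonneg hnn0 _
    have key3 : lam i^2 ≤ (Real.sqrt K₁ * ((n:ℝ) ^ ((3:ℝ)/4)))^2 := by
      rw [mul_pow, Real.sq_sqrt hK₁pos.le, ht]
      exact key2
    have h5 := stmt14_abs_le_of_sq key3 (by positivity)
    calc |lam i| ≤ Real.sqrt K₁ * ((n:ℝ) ^ ((3:ℝ)/4)) := h5
      _ ≤ C * ((n:ℝ) ^ ((3:ℝ)/4)) := by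
          apply mul_le_mul_of_nonneg_right _ ht0
          rw [hCdef]; linarith [hK₀pos, hK₂pos]
end

section
/- Let 𝒢 be a family of graphs of the form X_{f,q} that is a family of quasi-random graphs with property QR(1/2), and let d ≥ 1. Suppose g ∈ F_q[x] has degree d and h(x,y) = f(g(x),g(y)). Then for all S, T ⊆ F_q, the graph X_{h,q} satisfies |e(S,T) − |S||T|/2| = O_d(√q · √(|S||T|)); i.e., composing with g preserves property QR(1/2) up to constants depending on d. -/
open scoped Classical

/-- Evaluation of a bivariate polynomial `f ∈ F[x,y]` at `(a, b)`. -/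
noncomputable def evalBiv {F : Type*} [CommRing F] (f : MvPolynomial (Fin 2) F)
    (a b : F) : F :=
  MvPolynomial.eval (fun i : Fin 2 => if i = 0 then a else b) f

/-- If `a ≤ b` with both nonnegative, then `a ≤ √(a b)`. -/
lemma le_sqrt_mul_of_le {a b : ℝ} (ha : 0 ≤ a) (hab : a ≤ b) :
    a ≤ Real.sqrt (a * b) := by
  nth_rewrite 1 [← Real.sqrt_sq ha]
  apply Real.sqrt_le_sqrt
  nlinarith

/-- fix `c > 0` and `d ≥ 1`.  There is `c' > 0` (depending only on `c, d`)
such that for every finite field `F_q` of odd order, every `f ∈ F_q[x,y]` whose graph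
`X_{f,q}` satisfies the `QR(1/2)` bound `|e(S,T) - |S||T|/2| ≤ c √q √(|S||T|)`, and every
`g ∈ F_q[x]` of degree `d`, the graph `X_{h,q}` with `h(x,y) = f(g(x), g(y))` satisfies
`|e(S,T) - |S||T|/2| ≤ c' √q √(|S||T|)` for all `S, T ⊆ F_q`. -/
theorem stmt15 (c : ℝ) (hc : 0 < c) (d : ℕ) (hd : 1 ≤ d) :
    ∃ c' > (0 : ℝ), ∀ (F : Type) [Field F] [Fintype F],
      Odd (Fintype.card F) →
      ∀ (f : MvPolynomial (Fin 2) F) (g : Polynomial F), g.natDegree = d →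
      (∀ S T : Finset F,
        |crossEdges (SimpleGraph.fromRel fun a b => IsSquare (evalBiv f a b)) S T -
            (S.card : ℝ) * T.card / 2| ≤
          c * Real.sqrt (Fintype.card F) * Real.sqrt ((S.card : ℝ) * T.card)) →
      ∀ S T : Finset F,
        |crossEdges
            (SimpleGraph.fromRel fun a b => IsSquare (evalBiv f (g.eval a) (g.eval b)))
            S T - (S.card : ℝ) * T.card / 2| ≤
          c' * Real.sqrt (Fintype.card F) * Real.sqrt ((S.card : ℝ) * T.card) := by
  have hd1 : (1 : ℝ) ≤ (d : ℝ) := by exact_mod_cast hd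
  refine ⟨c * (d : ℝ) ^ 2 + d, by nlinarith, ?_⟩
  intro F _ _ _hodd f g hg hQR S T
  set Gf := SimpleGraph.fromRel fun a b : F => IsSquare (evalBiv f a b) with hGf
  set Gh := SimpleGraph.fromRel
    (fun a b : F => IsSquare (evalBiv f (g.eval a) (g.eval b))) with hGh
  -- every fiber of `g.eval` meets any set in at most `d` points
  have fib : ∀ (y : F) (A : Finset F), (A.filter fun u => g.eval u = y).card ≤ d := by
    intro y A
    have hne : g - Polynomial.C y ≠ 0 := by
      intro h
      have h2 : (g - Polynomial.C y).natDegree = d := by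
        rw [Polynomial.natDegree_sub_C, hg]
      rw [h, Polynomial.natDegree_zero] at h2
      omega
    calc (A.filter fun u => g.eval u = y).card
        ≤ (g - Polynomial.C y).roots.toFinset.card := by
          apply Finset.card_le_card
          intro u hu
          rw [Finset.mem_filter] at hu
          rw [Multiset.mem_toFinset, Polynomial.mem_roots hne]
          simp [Polynomial.IsRoot, hu.2]
      _ ≤ Multiset.card (g - Polynomial.C y).roots := Multiset.toFinset_card_le _
      _ ≤ (g - Polynomial.C y).natDegree := Polynomial.card_roots' _
      _ = d := by rw [Polynomial.natDegree_sub_C, hg]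
  -- the rank function: position of `u` inside its fiber of `g.eval`
  obtain ⟨e⟩ : Nonempty (F ≃ Fin (Fintype.card F)) := ⟨Fintype.equivFin F⟩
  set r : F → ℕ :=
    fun u => (Finset.univ.filter fun v => g.eval v = g.eval u ∧ e v < e u).card with hr
  have rmono : ∀ u v : F, g.eval u = g.eval v → e u < e v → r u < r v := by
    intro u v huv hlt
    apply Finset.card_lt_card
    rw [Finset.ssubset_iff_of_subset]
    · refine ⟨u, ?_, ?_⟩
      · simp [huv, hlt]
      · simp
    · intro w hw
      rw [Finset.mem_filter] at hw ⊢
      exact ⟨Finset.mem_univ w, hw.2.1.trans huv, hw.2.2.trans hlt⟩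
  have rlt : ∀ u : F, r u < d := by
    intro u
    have h1 : r u < (Finset.univ.filter fun v => g.eval v = g.eval u).card := by
      apply Finset.card_lt_card
      rw [Finset.ssubset_iff_of_subset]
      · exact ⟨u, by simp, by simp⟩
      · intro w hw
        rw [Finset.mem_filter] at hw ⊢
        exact ⟨hw.1, hw.2.1⟩
    exact h1.trans_le (fib _ _)
  have rinj : ∀ u v : F, g.eval u = g.eval v → r u = r v → u = v := by
    intro u v huv hruv
    rcases lt_trichotomy (e u) (e v) with h | h | h
    · exact absurd hruv (rmono u v huv h).ne
    · exact e.injective h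
    · exact absurd hruv.symm (rmono v u huv.symm h).ne
  -- key adjacency transfer
  have adj_key : ∀ u v : F, g.eval u ≠ g.eval v →
      (Gh.Adj u v ↔ Gf.Adj (g.eval u) (g.eval v)) := by
    intro u v huv
    rw [hGh, hGf, SimpleGraph.fromRel_adj, SimpleGraph.fromRel_adj]
    constructor
    · rintro ⟨_, h⟩; exact ⟨huv, h⟩
    · rintro ⟨_, h⟩; exact ⟨fun hx => huv (by rw [hx]), h⟩
  -- split crossEdges of Gh into diagonal (same fiber) part D and main part M
  set D : ℝ := ∑ u ∈ S, ∑ v ∈ T,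
    (if g.eval u = g.eval v then (if Gh.Adj u v then (1 : ℝ) else 0) else 0) with hD
  set M : ℝ := ∑ u ∈ S, ∑ v ∈ T,
    (if g.eval u = g.eval v then 0
     else (if Gf.Adj (g.eval u) (g.eval v) then (1 : ℝ) else 0)) with hM
  have split : crossEdges Gh S T = D + M := by
    rw [hD, hM]
    simp only [crossEdges]
    rw [← Finset.sum_add_distrib]
    apply Finset.sum_congr rfl
    intro u _
    rw [← Finset.sum_add_distrib]
    apply Finset.sum_congr rfl
    intro v _
    by_cases h : g.eval u = g.eval v
    · simp [h]
    · simp [h, adj_key u v h]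
  -- bounds on D
  have hD0 : 0 ≤ D := by
    rw [hD]
    apply Finset.sum_nonneg
    intro u _
    apply Finset.sum_nonneg
    intro v _
    split_ifs <;> norm_num
  have hpoint : ∀ u v : F,
      (if g.eval u = g.eval v then (if Gh.Adj u v then (1 : ℝ) else 0) else 0)
        ≤ (if g.eval u = g.eval v then (1 : ℝ) else 0) := by
    intro u v
    split_ifs <;> norm_num
  have hDS : D ≤ (d : ℝ) * S.card := by
    rw [hD]
    calc (∑ u ∈ S, ∑ v ∈ T,
          (if g.eval u = g.eval v then (if Gh.Adj u v then (1 : ℝ) else 0) else 0))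
        ≤ ∑ u ∈ S, ∑ v ∈ T, (if g.eval u = g.eval v then (1 : ℝ) else 0) := by
          apply Finset.sum_le_sum
          intro u _
          apply Finset.sum_le_sum
          intro v _
          exact hpoint u v
      _ ≤ ∑ _u ∈ S, (d : ℝ) := by
          apply Finset.sum_le_sum
          intro u _
          have : (∑ v ∈ T, if g.eval u = g.eval v then (1 : ℝ) else 0)
              = ((T.filter fun v => g.eval u = g.eval v).card : ℝ) :=
            Finset.sum_boole _ _
          rw [this]
          have hsub : (T.filter fun v => g.eval u = g.eval v)
              = (T.filter fun v => g.eval v = g.eval u) := by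
            apply Finset.filter_congr
            intro v _
            simp [eq_comm]
          rw [hsub]
          exact_mod_cast fib (g.eval u) T
      _ = (d : ℝ) * S.card := by
          rw [Finset.sum_const, nsmul_eq_mul, mul_comm]
  have hDT : D ≤ (d : ℝ) * T.card := by
    rw [hD, Finset.sum_comm]
    calc (∑ v ∈ T, ∑ u ∈ S,
          (if g.eval u = g.eval v then (if Gh.Adj u v then (1 : ℝ) else 0) else 0))
        ≤ ∑ v ∈ T, ∑ u ∈ S, (if g.eval u = g.eval v then (1 : ℝ) else 0) := by
          apply Finset.sum_le_sum
          intro v _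
          apply Finset.sum_le_sum
          intro u _
          exact hpoint u v
      _ ≤ ∑ _v ∈ T, (d : ℝ) := by
          apply Finset.sum_le_sum
          intro v _
          have : (∑ u ∈ S, if g.eval u = g.eval v then (1 : ℝ) else 0)
              = ((S.filter fun u => g.eval u = g.eval v).card : ℝ) :=
            Finset.sum_boole _ _
          rw [this]
          exact_mod_cast fib (g.eval v) S
      _ = (d : ℝ) * T.card := by
          rw [Finset.sum_const, nsmul_eq_mul, mul_comm]
  have hDmin : D ≤ (d : ℝ) * Real.sqrt ((S.card : ℝ) * T.card) := by
    have hdnn : (0 : ℝ) ≤ (d : ℝ) := Nat.cast_nonneg _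
    rcases le_total (S.card : ℝ) (T.card : ℝ) with h | h
    · exact hDS.trans (mul_le_mul_of_nonneg_left
        (le_sqrt_mul_of_le (Nat.cast_nonneg _) h) hdnn)
    · have h2 : (T.card : ℝ) ≤ Real.sqrt ((S.card : ℝ) * T.card) := by
        rw [mul_comm]
        exact le_sqrt_mul_of_le (Nat.cast_nonneg _) h
      exact hDT.trans (mul_le_mul_of_nonneg_left h2 hdnn)
  -- fiberwise decomposition helper
  have h1 : ∀ (A : Finset F) (G : F → ℝ),
      ∑ u ∈ A, G u = ∑ i ∈ Finset.range d, ∑ u ∈ A.filter fun u => r u = i, G u :=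
    fun A G => (Finset.sum_fiberwise_of_maps_to
      (fun u _ => Finset.mem_range.mpr (rlt u)) G).symm
  -- the main part is a sum of crossEdges of Gf on images
  have hMeq : M = ∑ i ∈ Finset.range d, ∑ j ∈ Finset.range d,
      crossEdges Gf ((S.filter fun u => r u = i).image g.eval)
        ((T.filter fun v => r v = j).image g.eval) := by
    rw [hM, h1 S]
    apply Finset.sum_congr rfl
    intro i _
    calc ∑ u ∈ S.filter (fun u => r u = i), ∑ v ∈ T,
          (if g.eval u = g.eval v then 0
           else (if Gf.Adj (g.eval u) (g.eval v) then (1 : ℝ) else 0))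
        = ∑ u ∈ S.filter (fun u => r u = i), ∑ j ∈ Finset.range d,
            ∑ v ∈ T.filter (fun v => r v = j),
            (if g.eval u = g.eval v then 0
             else (if Gf.Adj (g.eval u) (g.eval v) then (1 : ℝ) else 0)) := by
          apply Finset.sum_congr rfl
          intro u _
          exact h1 T _
      _ = ∑ j ∈ Finset.range d, ∑ u ∈ S.filter (fun u => r u = i),
            ∑ v ∈ T.filter (fun v => r v = j),
            (if g.eval u = g.eval v then 0
             else (if Gf.Adj (g.eval u) (g.eval v) then (1 : ℝ) else 0)) :=
          Finset.sum_comm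
      _ = ∑ j ∈ Finset.range d,
            crossEdges Gf ((S.filter fun u => r u = i).image g.eval)
              ((T.filter fun v => r v = j).image g.eval) := by
          apply Finset.sum_congr rfl
          intro j _
          have hSinj : ∀ x ∈ S.filter (fun u => r u = i),
              ∀ y ∈ S.filter (fun u => r u = i), g.eval x = g.eval y → x = y := by
            intro x hx y hy hxy
            rw [Finset.mem_filter] at hx hy
            exact rinj x y hxy (hx.2.trans hy.2.symm)
          have hTinj : ∀ x ∈ T.filter (fun v => r v = j),
              ∀ y ∈ T.filter (fun v => r v = j), g.eval x = g.eval y → x = y := by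
            intro x hx y hy hxy
            rw [Finset.mem_filter] at hx hy
            exact rinj x y hxy (hx.2.trans hy.2.symm)
          simp only [crossEdges]
          rw [Finset.sum_image hSinj]
          apply Finset.sum_congr rfl
          intro u _
          rw [Finset.sum_image hTinj]
          apply Finset.sum_congr rfl
          intro v _
          by_cases h : g.eval u = g.eval v
          · simp [h, SimpleGraph.irrefl]
          · simp [h]
  -- cardinality facts
  have himg : ∀ (A : Finset F) (i : ℕ),
      ((A.filter fun u => r u = i).image g.eval).card
        = (A.filter fun u => r u = i).card := by
    intro A i
    apply Finset.card_image_of_injOn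
    intro x hx y hy hxy
    simp only [Finset.coe_filter, Set.mem_setOf_eq] at hx hy
    exact rinj x y hxy (hx.2.trans hy.2.symm)
  have hScard : ∑ i ∈ Finset.range d, ((S.filter fun u => r u = i).card : ℝ)
      = (S.card : ℝ) := by
    have := h1 S (fun _ => (1 : ℝ))
    simpa [Finset.sum_const, nsmul_eq_mul] using this.symm
  have hTcard : ∑ j ∈ Finset.range d, ((T.filter fun v => r v = j).card : ℝ)
      = (T.card : ℝ) := by
    have := h1 T (fun _ => (1 : ℝ))
    simpa [Finset.sum_const, nsmul_eq_mul] using this.symm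
  -- product decomposition of |S||T|/2
  have hprod : ∑ i ∈ Finset.range d, ∑ j ∈ Finset.range d,
      ((S.filter fun u => r u = i).card : ℝ) * ((T.filter fun v => r v = j).card : ℝ) / 2
      = (S.card : ℝ) * T.card / 2 := by
    rw [← hScard, ← hTcard, Finset.sum_mul_sum]
    rw [Finset.sum_div]
    apply Finset.sum_congr rfl
    intro i _
    rw [Finset.sum_div]
  -- per-block QR bound
  have hblock : ∀ i ∈ Finset.range d, ∀ j ∈ Finset.range d,
      |crossEdges Gf ((S.filter fun u => r u = i).image g.eval)
          ((T.filter fun v => r v = j).image g.eval)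
        - ((S.filter fun u => r u = i).card : ℝ)
          * ((T.filter fun v => r v = j).card : ℝ) / 2|
      ≤ c * Real.sqrt (Fintype.card F) * Real.sqrt ((S.card : ℝ) * T.card) := by
    intro i _ j _
    have h := hQR ((S.filter fun u => r u = i).image g.eval)
      ((T.filter fun v => r v = j).image g.eval)
    rw [himg S i, himg T j] at h
    have hcn : (0 : ℝ) ≤ c * Real.sqrt (Fintype.card F) := by positivity
    have hs : ((S.filter fun u => r u = i).card : ℝ) ≤ (S.card : ℝ) := by
      exact_mod_cast Finset.card_le_card (Finset.filter_subset _ _)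
    have ht : ((T.filter fun v => r v = j).card : ℝ) ≤ (T.card : ℝ) := by
      exact_mod_cast Finset.card_le_card (Finset.filter_subset _ _)
    have hm : ((S.filter fun u => r u = i).card : ℝ)
        * ((T.filter fun v => r v = j).card : ℝ) ≤ (S.card : ℝ) * T.card :=
      mul_le_mul hs ht (Nat.cast_nonneg _) (Nat.cast_nonneg _)
    exact h.trans (mul_le_mul_of_nonneg_left (Real.sqrt_le_sqrt hm) hcn)
  -- assemble
  have key : crossEdges Gh S T - (S.card : ℝ) * T.card / 2
      = (∑ i ∈ Finset.range d, ∑ j ∈ Finset.range d,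
          (crossEdges Gf ((S.filter fun u => r u = i).image g.eval)
              ((T.filter fun v => r v = j).image g.eval)
            - ((S.filter fun u => r u = i).card : ℝ)
              * ((T.filter fun v => r v = j).card : ℝ) / 2)) + D := by
    have expand : ∀ (A B : ℕ → ℕ → ℝ),
        (∑ i ∈ Finset.range d, ∑ j ∈ Finset.range d, (A i j - B i j))
          = (∑ i ∈ Finset.range d, ∑ j ∈ Finset.range d, A i j)
            - (∑ i ∈ Finset.range d, ∑ j ∈ Finset.range d, B i j) := by
      intro A B
      rw [← Finset.sum_sub_distrib]
      exact Finset.sum_congr rfl fun i _ => Finset.sum_sub_distrib _ _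
    rw [split, hMeq, ← hprod, expand]
    ring
  rw [key]
  have hsqrtn : (1 : ℝ) ≤ Real.sqrt (Fintype.card F) := by
    rw [Real.one_le_sqrt]
    exact_mod_cast Fintype.card_pos
  have hst : (0 : ℝ) ≤ Real.sqrt ((S.card : ℝ) * T.card) := Real.sqrt_nonneg _
  calc |(∑ i ∈ Finset.range d, ∑ j ∈ Finset.range d,
          (crossEdges Gf ((S.filter fun u => r u = i).image g.eval)
              ((T.filter fun v => r v = j).image g.eval)
            - ((S.filter fun u => r u = i).card : ℝ)
              * ((T.filter fun v => r v = j).card : ℝ) / 2)) + D|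
      ≤ |∑ i ∈ Finset.range d, ∑ j ∈ Finset.range d,
          (crossEdges Gf ((S.filter fun u => r u = i).image g.eval)
              ((T.filter fun v => r v = j).image g.eval)
            - ((S.filter fun u => r u = i).card : ℝ)
              * ((T.filter fun v => r v = j).card : ℝ) / 2)| + |D| :=
        abs_add_le _ _
    _ ≤ (∑ i ∈ Finset.range d, ∑ j ∈ Finset.range d,
          |crossEdges Gf ((S.filter fun u => r u = i).image g.eval)
              ((T.filter fun v => r v = j).image g.eval)
            - ((S.filter fun u => r u = i).card : ℝ)
              * ((T.filter fun v => r v = j).card : ℝ) / 2|) + |D| :=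
        add_le_add ((Finset.abs_sum_le_sum_abs _ _).trans
          (Finset.sum_le_sum fun i _ => Finset.abs_sum_le_sum_abs _ _)) le_rfl
    _ ≤ (∑ _i ∈ Finset.range d, ∑ _j ∈ Finset.range d,
          c * Real.sqrt (Fintype.card F) * Real.sqrt ((S.card : ℝ) * T.card))
        + (d : ℝ) * Real.sqrt ((S.card : ℝ) * T.card) := by
        apply add_le_add
        · apply Finset.sum_le_sum
          intro i hi
          apply Finset.sum_le_sum
          intro j hj
          exact hblock i hi j hj
        · rw [abs_of_nonneg hD0]
          exact hDmin
    _ = (d : ℝ) ^ 2 * (c * Real.sqrt (Fintype.card F) * Real.sqrt ((S.card : ℝ) * T.card))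
        + (d : ℝ) * Real.sqrt ((S.card : ℝ) * T.card) := by
        rw [Finset.sum_const, Finset.sum_const, Finset.card_range,
          nsmul_eq_mul, nsmul_eq_mul]
        ring
    _ ≤ (c * (d : ℝ) ^ 2 + d) * Real.sqrt (Fintype.card F)
        * Real.sqrt ((S.card : ℝ) * T.card) := by
        have h2 : (d : ℝ) * Real.sqrt ((S.card : ℝ) * T.card)
            ≤ (d : ℝ) * Real.sqrt (Fintype.card F) * Real.sqrt ((S.card : ℝ) * T.card) := by
          nlinarith
        nlinarith [Real.sqrt_nonneg ((Fintype.card F : ℝ))]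
end

section
/- Let q be an odd prime power, d an odd positive integer, and f ∈ F_q[x,y] a homogeneous polynomial of degree d. Let r ∈ F_q be a non-square. If I ⊆ F_q is an independent set in the graph X_{f,q}, then rI = {r·a : a ∈ I} is a clique in X_{f,q}. Consequently ω(X_{f,q}) ≥ α(X_{f,q}). -/
open scoped Classical

/-- An independent set of a simple graph: a set of pairwise non-adjacent vertices. -/
def IsIndepSet' {V : Type*} (G : SimpleGraph V) (s : Set V) : Prop :=
  ∀ ⦃a⦄, a ∈ s → ∀ ⦃b⦄, b ∈ s → a ≠ b → ¬ G.Adj a b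

/-- The independence number of a graph: the clique number of its complement. -/
noncomputable def indepNum {V : Type*} (G : SimpleGraph V) : ℕ := Gᶜ.cliqueNum

lemma eval_scale {F : Type*} [CommRing F] {f : MvPolynomial (Fin 2) F} {d : ℕ}
    (hhom : f.IsHomogeneous d) (c : F) (x : Fin 2 → F) :
    MvPolynomial.eval (fun i => c * x i) f = c ^ d * MvPolynomial.eval x f := by
  rw [MvPolynomial.eval_eq', MvPolynomial.eval_eq', Finset.mul_sum]
  apply Finset.sum_congr rfl
  intro m hm
  have hw := hhom (MvPolynomial.mem_support_iff.mp hm)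
  have hdeg : ∑ i, m i = d := by
    have h1 : m.degree = d := by rw [Finsupp.degree_eq_weight_one]; exact hw
    rw [← h1, Finsupp.degree]
    exact (Finset.sum_subset (Finset.subset_univ _) (by
      intro i _ hi
      exact Finsupp.notMem_support_iff.mp hi)).symm
  simp_rw [mul_pow]
  rw [Finset.prod_mul_distrib, Finset.prod_pow_eq_pow_sum, hdeg]
  ring

lemma mul_nonsquare {F : Type*} [Field F] [Fintype F] [DecidableEq F]
    {x y : F} (hx : ¬ IsSquare x) (hy : ¬ IsSquare y) : IsSquare (x * y) := by
  have hx0 : x ≠ 0 := fun h => hx (h ▸ (IsSquare.zero : IsSquare (0:F)))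
  have hy0 : y ≠ 0 := fun h => hy (h ▸ (IsSquare.zero : IsSquare (0:F)))
  have h1 := quadraticChar_neg_one_iff_not_isSquare.mpr hx
  have h2 := quadraticChar_neg_one_iff_not_isSquare.mpr hy
  have : quadraticChar F (x * y) = 1 := by rw [map_mul, h1, h2]; ring
  exact (quadraticChar_one_iff_isSquare (mul_ne_zero hx0 hy0)).mp this

/-- let `q` be an odd prime power, `d` an odd positive integer, and
`f ∈ F_q[x,y]` homogeneous of degree `d`.  Let `r ∈ F_q` be a non-square.  If `I` is an
independent set of `X_{f,q}`, then `r·I` is a clique of `X_{f,q}`.  Consequently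
`ω(X_{f,q}) ≥ α(X_{f,q})`. -/
theorem stmt16 (F : Type*) [Field F] [Fintype F] (hodd : Odd (Fintype.card F))
    (d : ℕ) (hd1 : 0 < d) (hdodd : Odd d)
    (f : MvPolynomial (Fin 2) F) (hhom : f.IsHomogeneous d)
    (r : F) (hr : ¬ IsSquare r) :
    (∀ I : Set F,
      IsIndepSet' (SimpleGraph.fromRel fun a b => IsSquare (evalBiv f a b)) I →
      (SimpleGraph.fromRel fun a b => IsSquare (evalBiv f a b)).IsClique
        ((fun a => r * a) '' I)) ∧
    indepNum (SimpleGraph.fromRel fun a b => IsSquare (evalBiv f a b)) ≤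
      (SimpleGraph.fromRel fun a b => IsSquare (evalBiv f a b)).cliqueNum := by
  classical
  set G := SimpleGraph.fromRel fun a b => IsSquare (evalBiv f a b) with hG
  have hr0 : r ≠ 0 := fun h => hr (h ▸ (IsSquare.zero : IsSquare (0:F)))
  have hrd : ¬ IsSquare (r ^ d) := by
    rw [← quadraticChar_neg_one_iff_not_isSquare] at hr ⊢
    rw [map_pow, hr, hdodd.neg_one_pow]
  have key : ∀ a b : F, evalBiv f (r * a) (r * b) = r ^ d * evalBiv f a b := by
    intro a b
    unfold evalBiv
    rw [← eval_scale hhom r]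
    have : (fun i : Fin 2 => if i = 0 then r * a else r * b) =
        (fun i : Fin 2 => r * if i = 0 then a else b) := by
      funext i; split <;> rfl
    rw [this]
  have part1 : ∀ I : Set F, IsIndepSet' G I → G.IsClique ((fun a => r * a) '' I) := by
    intro I hI
    rintro _ ⟨a, ha, rfl⟩ _ ⟨b, hb, rfl⟩ hne
    have hab : a ≠ b := fun h => hne (by rw [h])
    have hnadj := hI ha hb hab
    rw [hG, SimpleGraph.fromRel_adj] at hnadj ⊢
    push_neg at hnadj
    obtain ⟨h1, _⟩ := hnadj hab
    refine ⟨hne, Or.inl ?_⟩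
    rw [key]
    exact mul_nonsquare hrd h1
  refine ⟨part1, ?_⟩
  unfold indepNum SimpleGraph.cliqueNum
  apply csSup_le_csSup
  · refine ⟨Fintype.card F, ?_⟩
    rintro n ⟨s, hs⟩
    rw [← hs.card_eq]
    exact Finset.card_le_univ s
  · exact ⟨0, ∅, by simp [SimpleGraph.isNClique_empty]⟩
  · rintro n ⟨s, hs⟩
    refine ⟨s.image (fun a => r * a), ?_, ?_⟩
    · have hind : IsIndepSet' G ↑s := by
        intro a ha b hb hab
        exact ((SimpleGraph.compl_adj _ _ _).mp (hs.isClique ha hb hab)).2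
      have := part1 ↑s hind
      rwa [Finset.coe_image]
    · rw [Finset.card_image_of_injective _ (mul_right_injective₀ hr0), hs.card_eq]
end

section
/- Let G be a graph on n vertices with adjacency matrix A, and suppose all but O(1) vertices of G have degree n/2 + O(n^η) for some η ∈ [1/2,1). Let u = (1/√n)(1,...,1)ᵀ and let e_1 be a unit Perron eigenvector of A with eigenvalue λ_1. Then writing A·u = (n/2)·u + w, one has ‖w‖ = O(n^η), and u = (1+O(‖z‖))e_1 + z for some vector z orthogonal-decomposed with ‖z‖ = O(n^{η−1}), provided |λ_2| = O(n^γ) with γ < 1. -/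
set_option maxHeartbeats 1000000


open scoped Classical Matrix

/-- fix constants `c, cs > 0`, `η ∈ [1/2, 1)` and `γ < 1`.  There is a
constant `C > 0` such that for every graph `G` on `n ≥ 1` vertices in which all but at
most `c` vertices (`O(1)` many) have degree `n/2 + O(n^η)`, with a unit Perron eigenvector
`e₁` of the adjacency matrix `A` (eigenvalue `λ₁`), and with all eigenvalues orthogonal to
`e₁` bounded by `cs·n^γ` in absolute value (`|λ₂| = O(n^γ)`), the vector
`u = (1/√n)(1,…,1)ᵀ` satisfies: `w := A u - (n/2) u` has `‖w‖ ≤ C n^η`, and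
`u = (1+ε) e₁ + z` with `z ⟂ e₁`, `‖z‖ ≤ C n^{η-1}` and `|ε| ≤ C ‖z‖`. -/
theorem stmt18 (c cs η γ : ℝ) (hc : 0 < c) (hcs : 0 < cs)
    (hη : 1 / 2 ≤ η) (hη1 : η < 1) (hγ : γ < 1) :
    ∃ C > (0 : ℝ), ∀ (n : ℕ), 1 ≤ n → ∀ (G : SimpleGraph (Fin n))
      (bad : Finset (Fin n)) (e1 : Fin n → ℝ) (lam1 : ℝ),
      ((bad.card : ℝ) ≤ c) →
      (∀ v : Fin n, v ∉ bad → |(G.degree v : ℝ) - (n : ℝ) / 2| ≤ c * (n : ℝ) ^ η) →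
      (e1 ⬝ᵥ e1 = 1) →
      (∀ i, 0 ≤ e1 i) →
      ((G.adjMatrix ℝ) *ᵥ e1 = lam1 • e1) →
      (∀ x : Fin n → ℝ, x ⬝ᵥ e1 = 0 →
        |x ⬝ᵥ ((G.adjMatrix ℝ) *ᵥ x)| ≤ cs * (n : ℝ) ^ γ * (x ⬝ᵥ x)) →
      ∀ (u w : Fin n → ℝ),
        (u = fun _ => 1 / Real.sqrt n) →
        (w = (G.adjMatrix ℝ) *ᵥ u - ((n : ℝ) / 2) • u) →
        Real.sqrt (w ⬝ᵥ w) ≤ C * (n : ℝ) ^ η ∧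
        ∃ (z : Fin n → ℝ) (ε : ℝ),
          z ⬝ᵥ e1 = 0 ∧
          u = (1 + ε) • e1 + z ∧
          Real.sqrt (z ⬝ᵥ z) ≤ C * (n : ℝ) ^ (η - 1) ∧
          |ε| ≤ C * Real.sqrt (z ⬝ᵥ z) := by
  have h1γ : (0:ℝ) < 1 - γ := by linarith
  obtain ⟨N₀, hN₀⟩ : ∃ N₀ : ℕ, ∀ m : ℕ, N₀ ≤ m → 4*cs ≤ (m:ℝ)^(1-γ) := by
    have h : Filter.Tendsto (fun m : ℕ => ((m:ℝ))^(1-γ)) Filter.atTop Filter.atTop :=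
      (tendsto_rpow_atTop h1γ).comp tendsto_natCast_atTop_atTop
    exact Filter.eventually_atTop.mp (h.eventually_ge_atTop (4*cs))
  set K : ℝ := Real.sqrt (c + c^2) + 1 with hKdef
  have hsqnn : 0 ≤ Real.sqrt (c + c^2) := Real.sqrt_nonneg _
  have hK1 : 1 ≤ K := by simp only [hKdef]; linarith
  have hN1 : (0:ℝ) < ((N₀:ℝ)+1)^(1-η) := Real.rpow_pos_of_pos (by positivity) _
  set C : ℝ := 5*K + ((N₀:ℝ)+1)^(1-η) + 1 with hCdef
  have hC1 : 1 ≤ C := by simp only [hCdef]; linarith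
  have hCK : K ≤ C := by simp only [hCdef]; linarith
  have hC4K : 4*K ≤ C := by simp only [hCdef]; linarith
  have hCN : ((N₀:ℝ)+1)^(1-η) ≤ C := by simp only [hCdef]; linarith
  refine ⟨C, by linarith, ?_⟩
  intro n hn G bad e1 lam1 hbad hdeg he1 he1nn hAe1 hspec u w hu hw
  have hn0 : (0:ℝ) < n := by exact_mod_cast hn
  have hn1 : (1:ℝ) ≤ n := by exact_mod_cast hn
  have hsq : 0 < Real.sqrt n := Real.sqrt_pos.mpr hn0
  have hss : (Real.sqrt n)^2 = (n:ℝ) := Real.sq_sqrt hn0.le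
  have hre : ((n:ℝ)^η)^2 = (n:ℝ)^(2*η) := by
    rw [← Real.rpow_natCast ((n:ℝ)^η) 2, ← Real.rpow_mul hn0.le]
    norm_num [mul_comm]
  have hnpow : (n:ℝ) ≤ (n:ℝ)^(2*η) := by
    calc (n:ℝ) = (n:ℝ)^(1:ℝ) := (Real.rpow_one _).symm
    _ ≤ (n:ℝ)^(2*η) := Real.rpow_le_rpow_of_exponent_le hn1 (by linarith)
  -- u is a unit vector
  have huu : u ⬝ᵥ u = 1 := by
    subst hu
    simp only [dotProduct, Finset.sum_const, Finset.card_univ, Fintype.card_fin,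
      nsmul_eq_mul]
    rw [div_mul_div_comm, one_mul, ← hss]
    field_simp
    rw [Real.sqrt_sq hsq.le]
  -- coordinates of w
  have hwj : ∀ j, w j = ((G.degree j : ℝ) - (n:ℝ)/2) / Real.sqrt n := by
    intro j
    subst hw hu
    simp only [Pi.sub_apply, Pi.smul_apply, SimpleGraph.adjMatrix_mulVec_apply,
      Finset.sum_const, SimpleGraph.neighborFinset_eq_filter]
    rw [← SimpleGraph.neighborFinset_eq_filter, SimpleGraph.card_neighborFinset_eq_degree,
      nsmul_eq_mul, smul_eq_mul]
    field_simp
  have hwsq : ∀ j, (w j)^2 = ((G.degree j : ℝ) - (n:ℝ)/2)^2 / n := by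
    intro j; rw [hwj, div_pow, hss]
  have hdegle : ∀ j, ((G.degree j : ℝ)) ≤ n := by
    intro j
    have := G.degree_lt_card_verts j
    rw [Fintype.card_fin] at this
    exact_mod_cast this.le
  have hdegnn : ∀ j, (0:ℝ) ≤ (G.degree j : ℝ) := fun j => Nat.cast_nonneg _
  -- bound on ‖w‖²
  have hW : w ⬝ᵥ w ≤ (c + c^2) * (n:ℝ)^(2*η) := by
    have e : w ⬝ᵥ w = ∑ j, (w j)^2 := by simp [dotProduct, sq]
    rw [e, ← Finset.sum_add_sum_compl bad]
    have hb : ∑ j ∈ bad, (w j)^2 ≤ (bad.card : ℝ) * ((n:ℝ)/4) := by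
      rw [← nsmul_eq_mul]
      refine Finset.sum_le_card_nsmul bad _ _ (fun j _ => ?_)
      rw [hwsq, div_le_iff₀ hn0]
      nlinarith [hdegle j, hdegnn j]
    have hg : ∑ j ∈ badᶜ, (w j)^2 ≤ (badᶜ.card : ℝ) * (c^2 * (n:ℝ)^(2*η) / n) := by
      rw [← nsmul_eq_mul]
      refine Finset.sum_le_card_nsmul badᶜ _ _ (fun j hj => ?_)
      have hj' : j ∉ bad := Finset.mem_compl.mp hj
      have h1 := hdeg j hj'
      have h2 := abs_le.mp h1
      rw [hwsq, div_le_div_iff_of_pos_right hn0]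
      nlinarith [Real.rpow_pos_of_pos hn0 η]
    have hcard : (badᶜ.card : ℝ) ≤ n := by
      have : badᶜ.card ≤ Fintype.card (Fin n) := Finset.card_le_univ _
      rw [Fintype.card_fin] at this
      exact_mod_cast this
    have hgg : (badᶜ.card : ℝ) * (c^2 * (n:ℝ)^(2*η) / n) ≤ c^2 * (n:ℝ)^(2*η) := by
      have hpos : 0 ≤ c^2 * (n:ℝ)^(2*η) / n := by positivity
      calc (badᶜ.card : ℝ) * (c^2 * (n:ℝ)^(2*η) / n) ≤ (n:ℝ) * (c^2 * (n:ℝ)^(2*η) / n) := by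
            exact mul_le_mul_of_nonneg_right hcard hpos
      _ = c^2 * (n:ℝ)^(2*η) := by field_simp
    have hbb : (bad.card : ℝ) * ((n:ℝ)/4) ≤ c * (n:ℝ)^(2*η) := by
      have h1 : (bad.card : ℝ) * ((n:ℝ)/4) ≤ c * ((n:ℝ)/4) :=
        mul_le_mul_of_nonneg_right hbad (by linarith)
      have h2 : c * ((n:ℝ)/4) ≤ c * (n:ℝ)^(2*η) := by
        refine mul_le_mul_of_nonneg_left ?_ hc.le
        linarith
      linarith
    have hsum := add_le_add (hb.trans hbb) (hg.trans hgg)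
    have hexp : (c + c^2) * (n:ℝ)^(2*η) = c * (n:ℝ)^(2*η) + c^2 * (n:ℝ)^(2*η) := by ring
    linarith
  have hWs : Real.sqrt (w ⬝ᵥ w) ≤ K * (n:ℝ)^η := by
    have h2 : (c + c^2) * (n:ℝ)^(2*η) ≤ (K * (n:ℝ)^η)^2 := by
      have : c + c^2 ≤ K^2 := by
        have := Real.sq_sqrt (by positivity : (0:ℝ) ≤ c + c^2)
        nlinarith
      rw [mul_pow, hre]
      have : 0 ≤ (n:ℝ)^(2*η) := (Real.rpow_pos_of_pos hn0 _).le
      nlinarith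
    calc Real.sqrt (w ⬝ᵥ w) ≤ Real.sqrt ((K * (n:ℝ)^η)^2) := Real.sqrt_le_sqrt (hW.trans h2)
    _ = K * (n:ℝ)^η := Real.sqrt_sq (by positivity)
  have hgoal1 : Real.sqrt (w ⬝ᵥ w) ≤ C * (n:ℝ)^η := by
    refine hWs.trans ?_
    exact mul_le_mul_of_nonneg_right hCK (Real.rpow_pos_of_pos hn0 _).le
  refine ⟨hgoal1, ?_⟩
  -- decomposition
  set b : ℝ := u ⬝ᵥ e1 with hbdef
  set z : Fin n → ℝ := u - b • e1 with hzdef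
  have hze : z ⬝ᵥ e1 = 0 := by
    simp [hzdef, sub_dotProduct, smul_dotProduct, he1, hbdef]
  have he1u : e1 ⬝ᵥ u = b := by rw [dotProduct_comm]
  have hzz : z ⬝ᵥ z = 1 - b^2 := by
    simp only [hzdef, sub_dotProduct, dotProduct_sub, smul_dotProduct,
      dotProduct_smul, he1, huu, he1u, smul_eq_mul, ← hbdef]
    ring
  have hb0 : 0 ≤ b := by
    rw [hbdef, hu]
    refine Finset.sum_nonneg (fun j _ => ?_)
    have := he1nn j
    positivity
  have hzz0 : 0 ≤ z ⬝ᵥ z := Finset.sum_nonneg (fun j _ => mul_self_nonneg _)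
  have hb1 : b ≤ 1 := by nlinarith
  set s : ℝ := Real.sqrt (z ⬝ᵥ z) with hsdef
  have hs0 : 0 ≤ s := Real.sqrt_nonneg _
  have hs2 : s^2 = z ⬝ᵥ z := Real.sq_sqrt hzz0
  have hsle1 : s ≤ 1 := by nlinarith
  refine ⟨z, b - 1, hze, ?_, ?_, ?_⟩
  · simp only [hzdef]
    have : (1 + (b - 1)) = b := by ring
    rw [this]
    abel
  · -- ‖z‖ bound
    by_cases hcase : N₀ ≤ n
    · -- large n
      have hgap := hN₀ n hcase
      have hcsle : cs * (n:ℝ)^γ ≤ (n:ℝ)/4 := by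
        have hpg : (0:ℝ) < (n:ℝ)^γ := Real.rpow_pos_of_pos hn0 γ
        have : (4*cs) * (n:ℝ)^γ ≤ (n:ℝ)^(1-γ) * (n:ℝ)^γ :=
          mul_le_mul_of_nonneg_right hgap hpg.le
        rw [← Real.rpow_add hn0] at this
        simp only [sub_add_cancel, Real.rpow_one] at this
        linarith
      -- key identity
      have hAu : (G.adjMatrix ℝ) *ᵥ u = ((n:ℝ)/2) • u + w := by rw [hw]; abel
      have hAz : (G.adjMatrix ℝ) *ᵥ z = ((n:ℝ)/2) • u + w - b • (lam1 • e1) := by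
        rw [hzdef, Matrix.mulVec_sub, Matrix.mulVec_smul, hAe1, hAu]
      have hzu : z ⬝ᵥ u = z ⬝ᵥ z := by
        have : u = z + b • e1 := by rw [hzdef]; abel
        rw [this, dotProduct_add, dotProduct_smul, hze, smul_eq_mul]
        ring
      have hkey : z ⬝ᵥ ((G.adjMatrix ℝ) *ᵥ z) = ((n:ℝ)/2) * (z ⬝ᵥ z) + z ⬝ᵥ w := by
        rw [hAz, dotProduct_sub, dotProduct_add, dotProduct_smul,
          dotProduct_smul, dotProduct_smul, hze, hzu, smul_eq_mul, smul_eq_mul,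
          smul_eq_mul]
        ring
      have hspecz := hspec z hze
      rw [hkey] at hspecz
      -- Cauchy-Schwarz
      have ezz : z ⬝ᵥ z = ∑ j, (z j)^2 := by simp [dotProduct, sq]
      have eww : w ⬝ᵥ w = ∑ j, (w j)^2 := by simp [dotProduct, sq]
      have e4 : ∑ j, z j * w j = z ⬝ᵥ w := rfl
      have hCS : |z ⬝ᵥ w| ≤ s * Real.sqrt (w ⬝ᵥ w) := by
        have h1 := Real.sum_mul_le_sqrt_mul_sqrt Finset.univ z w
        have h2 := Real.sum_mul_le_sqrt_mul_sqrt Finset.univ (fun j => -z j) w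
        simp only [neg_mul, Finset.sum_neg_distrib, neg_sq] at h2
        rw [e4, ← ezz, ← eww, ← hsdef] at h1
        rw [e4, ← ezz, ← eww, ← hsdef] at h2
        rw [abs_le]
        exact ⟨by linarith only [h2], by linarith only [h1]⟩
      have hzw1 : z ⬝ᵥ w ≤ |z ⬝ᵥ w| := le_abs_self _
      have hsw : 0 ≤ Real.sqrt (w ⬝ᵥ w) := Real.sqrt_nonneg _
      have hupper := le_abs_self (((n:ℝ)/2) * (z ⬝ᵥ z) + z ⬝ᵥ w)
      -- (n/4) (z⬝z) ≤ s * K * n^η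
      have hkey2 : ((n:ℝ)/4) * (z ⬝ᵥ z) ≤ s * (K * (n:ℝ)^η) := by
        have hA1 : ((n:ℝ)/2) * (z ⬝ᵥ z) ≤ cs * (n:ℝ)^γ * (z ⬝ᵥ z) + s * Real.sqrt (w ⬝ᵥ w) := by
          have habs1 := (le_abs_self (((n:ℝ)/2) * (z ⬝ᵥ z) + z ⬝ᵥ w)).trans hspecz
          have hneg := neg_le_abs (z ⬝ᵥ w)
          linarith only [habs1, hneg, hCS]
        have hA2 : cs * (n:ℝ)^γ * (z ⬝ᵥ z) ≤ ((n:ℝ)/4) * (z ⬝ᵥ z) :=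
          mul_le_mul_of_nonneg_right hcsle hzz0
        have hA3 : s * Real.sqrt (w ⬝ᵥ w) ≤ s * (K * (n:ℝ)^η) :=
          mul_le_mul_of_nonneg_left hWs hs0
        have h9 : (n:ℝ)/2 * (z ⬝ᵥ z) ≤ (n:ℝ)/4 * (z ⬝ᵥ z) + s * (K * (n:ℝ)^η) :=
          hA1.trans (add_le_add hA2 hA3)
        linarith only [h9]
      have hP : (0:ℝ) < (n:ℝ)^(η-1) := Real.rpow_pos_of_pos hn0 _
      rcases eq_or_lt_of_le hs0 with hs|hs
      · rw [← hsdef, ← hs]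
        exact mul_nonneg (by linarith) hP.le
      · have hsplit : (n:ℝ)^η = (n:ℝ)^(η-1) * (n:ℝ) := by
          calc (n:ℝ)^η = (n:ℝ)^(η-1+1) := by norm_num
          _ = (n:ℝ)^(η-1) * (n:ℝ)^(1:ℝ) := Real.rpow_add hn0 _ _
          _ = (n:ℝ)^(η-1) * (n:ℝ) := by rw [Real.rpow_one]
        rw [← hs2, hsplit] at hkey2
        have h7 : ((n:ℝ)/4) * s ≤ K * (n:ℝ)^(η-1) * (n:ℝ) := by
          have h' : s * (((n:ℝ)/4) * s) ≤ s * (K * (n:ℝ)^(η-1) * (n:ℝ)) := by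
            calc s * (((n:ℝ)/4) * s) = ((n:ℝ)/4) * s^2 := by ring
            _ ≤ s * (K * ((n:ℝ)^(η-1) * (n:ℝ))) := hkey2
            _ = s * (K * (n:ℝ)^(η-1) * (n:ℝ)) := by ring
          exact le_of_mul_le_mul_left h' hs
        have h8 : s * (n:ℝ) ≤ (4*K * (n:ℝ)^(η-1)) * (n:ℝ) := by
          have h := mul_le_mul_of_nonneg_left h7 (by norm_num : (0:ℝ) ≤ 4)
          calc s * (n:ℝ) = 4 * (((n:ℝ)/4) * s) := by ring
          _ ≤ 4 * (K * (n:ℝ)^(η-1) * (n:ℝ)) := h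
          _ = (4*K * (n:ℝ)^(η-1)) * (n:ℝ) := by ring
        have hs4K : s ≤ 4*K * (n:ℝ)^(η-1) := le_of_mul_le_mul_right h8 hn0
        rw [← hsdef]
        calc s ≤ 4*K * (n:ℝ)^(η-1) := hs4K
        _ ≤ C * (n:ℝ)^(η-1) := mul_le_mul_of_nonneg_right hC4K hP.le
    · -- small n
      push_neg at hcase
      have hle : (n:ℝ) ≤ (N₀:ℝ) + 1 := by
        have : (n:ℝ) ≤ (N₀:ℝ) := by exact_mod_cast hcase.le
        linarith
      have h1 : (n:ℝ)^(1-η) ≤ ((N₀:ℝ)+1)^(1-η) :=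
        Real.rpow_le_rpow hn0.le hle (by linarith)
      have hp1 : (0:ℝ) < (n:ℝ)^(1-η) := Real.rpow_pos_of_pos hn0 _
      have hinv : (n:ℝ)^(η-1) = ((n:ℝ)^(1-η))⁻¹ := by
        rw [← Real.rpow_neg hn0.le]; ring_nf
      have hone : 1 ≤ ((N₀:ℝ)+1)^(1-η) * (n:ℝ)^(η-1) := by
        rw [hinv, ← div_eq_mul_inv, le_div_iff₀ hp1, one_mul]
        exact h1
      have hp2 : (0:ℝ) ≤ (n:ℝ)^(η-1) := (Real.rpow_pos_of_pos hn0 _).le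
      calc s ≤ 1 := hsle1
      _ ≤ ((N₀:ℝ)+1)^(1-η) * (n:ℝ)^(η-1) := hone
      _ ≤ C * (n:ℝ)^(η-1) := mul_le_mul_of_nonneg_right hCN hp2
  · -- ε bound
    have habs : |b - 1| = 1 - b := by rw [abs_sub_comm, abs_of_nonneg (by linarith)]
    rw [habs]
    have h1 : 1 - b ≤ 1 - b^2 := by nlinarith
    have h2 : 1 - b^2 = s^2 := by rw [hs2, hzz]
    have h3 : s^2 ≤ s := by nlinarith
    calc 1 - b ≤ s := by linarith [h1.trans_eq h2]
    _ ≤ C * s := by nlinarith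
end
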